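/- arXiv:0810.4060 — 4 statements merged into one kernel-verified Lean document; each statement's English description precedes it below -/
import Mathlib

section
/- Let Γ_1, …, Γ_n be finitely generated groups with n ≥ 2, let A be a finitely generated free abelian group, and let θ : D = Γ_1 × … × Γ_n → A be a homomorphism whose restriction to each coordinate subgroup Γ_i is surjective. Then ker θ is finitely generated, and for any choice of finite generating sets of ker θ and of D there is a constant C ∈ ℕ such that the distortion function of ker θ in D satisfies Δ(l) ≤ C·l² for all l. -/
open Subgroup

/-- Reduced word length in a free group. -/
noncomputable def fgNorm {X : Type*} (w : FreeGroup X) : ℕ :=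
  @FreeGroup.norm X (Classical.decEq X) w

/-- `w` is a product of exactly `N` conjugates of elements of `R ∪ R⁻¹`. -/
def ExprOf {X : Type*} (R : Set (FreeGroup X)) (w : FreeGroup X) (N : ℕ) : Prop :=
  ∃ l : List (FreeGroup X × FreeGroup X),
    l.length = N ∧ (∀ p ∈ l, p.2 ∈ R ∨ p.2⁻¹ ∈ R) ∧
    (l.map fun p => p.1 * p.2 * p.1⁻¹).prod = w

/-- The area of a null-homotopic word: the least number of conjugates of relators needed. -/
noncomputable def area {X : Type*} (R : Set (FreeGroup X)) (w : FreeGroup X) : ℕ :=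
  sInf {N | ExprOf R w N}

/-- The Dehn function of the presentation with relator set `R`. -/
noncomputable def dehn {X : Type*} (R : Set (FreeGroup X)) (l : ℕ) : ℕ :=
  sSup {A | ∃ w ∈ Subgroup.normalClosure R, fgNorm w ≤ l ∧ A = area R w}

/-- `f ⪯ g`. -/
def Preceq (f g : ℕ → ℕ) : Prop := ∃ C : ℕ, ∀ l, f l ≤ C * g (C * l + C) + C * l + C

/-- `f ≃ g`. -/
def FEquiv (f g : ℕ → ℕ) : Prop := Preceq f g ∧ Preceq g f

/-- `φ` realizes `⟨X | R⟩` as a presentation of `G`. -/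
def Presents {X : Type*} {G : Type*} [Group G] (R : Set (FreeGroup X))
    (φ : FreeGroup X →* G) : Prop :=
  Function.Surjective φ ∧ φ.ker = Subgroup.normalClosure R

def FinitelyPresentedGroup (G : Type*) [Group G] : Prop :=
  ∃ (X : Type) (_ : Finite X) (R : Set (FreeGroup X)) (φ : FreeGroup X →* G),
    R.Finite ∧ Presents R φ

/-- `f` is an isoperimetric function for `G` : the Dehn function of every finite
presentation of `G` is `⪯ f`. -/
def IsIsopFunction (G : Type*) [Group G] (f : ℕ → ℕ) : Prop :=
  ∀ (X : Type) (R : Set (FreeGroup X)) (φ : FreeGroup X →* G),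
    Finite X → R.Finite → Presents R φ → Preceq (dehn R) f

/-- `(α, ρ)` is an area-radius pair for the presentation with relator set `R`. -/
def IsAreaRadiusPair {X : Type*} (R : Set (FreeGroup X)) (α ρ : ℕ → ℕ) : Prop :=
  ∀ w ∈ Subgroup.normalClosure R, ∀ l : ℕ, fgNorm w ≤ l →
    ∃ L : List (FreeGroup X × FreeGroup X), L.length ≤ α l ∧
      (∀ p ∈ L, (p.2 ∈ R ∨ p.2⁻¹ ∈ R) ∧ fgNorm p.1 ≤ ρ l) ∧
      (L.map fun p => p.1 * p.2 * p.1⁻¹).prod = w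

/-- `g` is a product of at most `k` elements of `S ∪ S⁻¹`. -/
def WordLe {G : Type*} [Group G] (S : Set G) (g : G) (k : ℕ) : Prop :=
  ∃ l : List G, l.length ≤ k ∧ (∀ x ∈ l, x ∈ S ∨ x⁻¹ ∈ S) ∧ l.prod = g

/-- Word length of `g` with respect to the generating set `S`. -/
noncomputable def wordLength {G : Type*} [Group G] (S : Set G) (g : G) : ℕ :=
  sInf {k | WordLe S g k}

section WordLeLemmas

variable {G : Type*} [Group G] {S : Set G} {g g' : G} {k k' : ℕ}

theorem wordLe_one : WordLe S 1 0 := ⟨[], by simp⟩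

theorem WordLe.mono (h : WordLe S g k) (hk : k ≤ k') : WordLe S g k' := by
  obtain ⟨l, hl, hm, hp⟩ := h
  exact ⟨l, hl.trans hk, hm, hp⟩

theorem WordLe.mul (h : WordLe S g k) (h' : WordLe S g' k') : WordLe S (g * g') (k + k') := by
  obtain ⟨l, hl, hm, hp⟩ := h
  obtain ⟨l', hl', hm', hp'⟩ := h'
  refine ⟨l ++ l', by simpa using Nat.add_le_add hl hl', ?_, by simp [hp, hp']⟩
  intro x hx
  rcases List.mem_append.1 hx with h | h
  · exact hm x h
  · exact hm' x h

theorem WordLe.inv (h : WordLe S g k) : WordLe S g⁻¹ k := by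
  obtain ⟨l, hl, hm, hp⟩ := h
  refine ⟨(l.map fun x => x⁻¹).reverse, by simpa using hl, ?_, ?_⟩
  · intro x hx
    simp only [List.mem_reverse, List.mem_map] at hx
    obtain ⟨y, hy, rfl⟩ := hx
    rcases hm y hy with h | h
    · exact Or.inr (by simpa using h)
    · exact Or.inl h
  · rw [List.prod_reverse_noncomm, List.map_map]
    simp [hp]

theorem wordLe_of_mem (h : g ∈ S ∨ g⁻¹ ∈ S) : WordLe S g 1 := ⟨[g], by simp, by simpa using h, by simp⟩

theorem wordLe_prod (L : List G) (h : ∀ x ∈ L, x ∈ S ∨ x⁻¹ ∈ S) : WordLe S L.prod L.length :=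
  ⟨L, le_rfl, h, rfl⟩

theorem exists_wordLe_of_mem_closure (h : g ∈ Subgroup.closure S) : ∃ k, WordLe S g k := by
  induction h using Subgroup.closure_induction with
  | mem x hx => exact ⟨1, wordLe_of_mem (Or.inl hx)⟩
  | one => exact ⟨0, wordLe_one⟩
  | mul x y _ _ hx hy =>
    obtain ⟨k, hk⟩ := hx; obtain ⟨k', hk'⟩ := hy
    exact ⟨k + k', hk.mul hk'⟩
  | inv x _ hx =>
    obtain ⟨k, hk⟩ := hx
    exact ⟨k, hk.inv⟩

theorem wordLength_le_of_wordLe (h : WordLe S g k) : wordLength S g ≤ k := Nat.sInf_le h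

theorem wordLe_of_wordLength_le (hg : g ∈ Subgroup.closure S) (h : wordLength S g ≤ k) :
    WordLe S g k := by
  have hne : {k | WordLe S g k}.Nonempty := exists_wordLe_of_mem_closure hg
  exact (Nat.sInf_mem hne).mono h

theorem WordLe.prod_mem {H : Subgroup G} (hS : S ⊆ H) (h : WordLe S g k) : g ∈ H := by
  obtain ⟨l, _, hm, hp⟩ := h
  subst hp
  refine list_prod_mem fun x hx => ?_
  rcases hm x hx with h | h
  · exact hS h
  · simpa using H.inv_mem (hS h)

end WordLeLemmas

section ZWord
variable {M N : Type*} [Group M] [Group N] {κ : Type*}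

/-- Evaluation of a formal signed word. -/
def zword (f : κ → M) (u : List (κ × Bool)) : M :=
  (u.map fun p => cond p.2 (f p.1) (f p.1)⁻¹).prod

@[simp] theorem zword_nil (f : κ → M) : zword f [] = 1 := rfl

@[simp] theorem zword_cons (f : κ → M) (p : κ × Bool) (u : List (κ × Bool)) :
    zword f (p :: u) = (cond p.2 (f p.1) (f p.1)⁻¹) * zword f u := by
  simp [zword]

@[simp] theorem zword_append (f : κ → M) (u v : List (κ × Bool)) :
    zword f (u ++ v) = zword f u * zword f v := by
  simp [zword]

theorem map_zword (φ : M →* N) (f : κ → M) (u : List (κ × Bool)) :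
    φ (zword f u) = zword (fun a => φ (f a)) u := by
  induction u with
  | nil => simp
  | cons p u ih => cases p with | mk a s => cases s <;> simp [ih]

theorem zword_negrev (f : κ → M) (u : List (κ × Bool)) :
    zword f ((u.map fun p => (p.1, !p.2)).reverse) = (zword f u)⁻¹ := by
  induction u with
  | nil => simp
  | cons p u ih =>
    cases p with | mk a s =>
    cases s <;> simp [ih, List.map_cons, List.reverse_cons, mul_comm] <;> group

theorem zword_bind {P : Type*} (f : κ → M) (v : List P) (g : P → List (κ × Bool)) :
    zword f (v.flatMap g) = (v.map fun p => zword f (g p)).prod := by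
  induction v with
  | nil => simp
  | cons p v ih => simp [List.flatMap_cons, ih]

end ZWord

section WSum
variable {A : Type*} [AddCommGroup A] {κ : Type*}

/-- Additive weight of a formal signed word. -/
def wsum (b : κ → A) (u : List (κ × Bool)) : A :=
  (u.map fun p => cond p.2 (b p.1) (-(b p.1))).sum

@[simp] theorem wsum_nil (b : κ → A) : wsum b [] = 0 := rfl

@[simp] theorem wsum_cons (b : κ → A) (p : κ × Bool) (u : List (κ × Bool)) :
    wsum b (p :: u) = (cond p.2 (b p.1) (-(b p.1))) + wsum b u := by simp [wsum]

@[simp] theorem wsum_append (b : κ → A) (u v : List (κ × Bool)) :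
    wsum b (u ++ v) = wsum b u + wsum b v := by simp [wsum]

theorem zword_ofAdd (b : κ → A) (u : List (κ × Bool)) :
    zword (fun a => Multiplicative.ofAdd (b a)) u = Multiplicative.ofAdd (wsum b u) := by
  induction u with
  | nil => simp
  | cons p u ih => cases p with | mk a s => cases s <;> simp [ih] <;> rfl

theorem wsum_negrev (b : κ → A) (u : List (κ × Bool)) :
    wsum b ((u.map fun p => (p.1, !p.2)).reverse) = -(wsum b u) := by
  have := zword_negrev (fun a => Multiplicative.ofAdd (b a)) u
  rw [zword_ofAdd, zword_ofAdd] at this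
  exact Multiplicative.ofAdd.injective (by simpa using this)

theorem wsum_bind {P : Type*} (b : κ → A) (v : List P) (g : P → List (κ × Bool)) :
    wsum b (v.flatMap g) = (v.map fun p => wsum b (g p)).sum := by
  induction v with
  | nil => simp
  | cons p v ih => simp [List.flatMap_cons, ih]

theorem repr_wsum [DecidableEq κ] [Fintype κ] (b : Module.Basis κ ℤ A) (u : List (κ × Bool)) (a₀ : κ) :
    b.repr (wsum b u) a₀ = (u.count (a₀, true) : ℤ) - (u.count (a₀, false) : ℤ) := by
  induction u with
  | nil => simp
  | cons p u ih =>
    cases p with | mk a s =>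
    rw [wsum_cons, map_add, Finsupp.add_apply, ih]
    cases s <;> by_cases ha : a₀ = a <;>
      simp [ha, List.count_cons, Module.Basis.repr_self, Finsupp.single_apply,
        Prod.ext_iff] <;> (try exact fun h => ha h.symm) <;> ring

/-- Every element of `A` is the weight of some word. -/
theorem exists_word_wsum (b : κ → A) (hb : AddSubgroup.closure (Set.range b) = ⊤) (c : A) :
    ∃ u : List (κ × Bool), wsum b u = c := by
  have hc : c ∈ AddSubgroup.closure (Set.range b) := by rw [hb]; trivial
  induction hc using AddSubgroup.closure_induction with
  | mem x hx =>
    obtain ⟨a, rfl⟩ := hx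
    exact ⟨[(a, true)], by simp⟩
  | zero => exact ⟨[], by simp⟩
  | add x y _ _ hx hy =>
    obtain ⟨u, hu⟩ := hx; obtain ⟨v, hv⟩ := hy
    exact ⟨u ++ v, by simp [hu, hv]⟩
  | neg x _ hx =>
    obtain ⟨u, hu⟩ := hx
    exact ⟨(u.map fun p => (p.1, !p.2)).reverse, by simp [wsum_negrev, hu]⟩

theorem basis_closure_top [Fintype κ] (b : Module.Basis κ ℤ A) :
    AddSubgroup.closure (Set.range b) = ⊤ := by
  have h := b.span_eq
  have := Submodule.span_int_eq_addSubgroupClosure (M := A) (Set.range b)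
  rw [h] at this
  simpa using this.symm

end WSum

section PiDecomp

theorem prod_eq_of_unique {ι M : Type*} [Monoid M] (f : ι → M) (j : ι) :
    ∀ (L : List ι), j ∈ L → L.Nodup → (∀ i ∈ L, i ≠ j → f i = 1) → (L.map f).prod = f j := by
  intro L
  induction L with
  | nil => simp
  | cons a L ih =>
    intro hj hnd h1
    rcases List.mem_cons.1 hj with rfl | hj'
    · have : ∀ x ∈ L.map f, x = 1 := by
        intro x hx
        obtain ⟨i, hi, rfl⟩ := List.mem_map.1 hx
        exact h1 i (by simp [hi]) (fun h => (List.nodup_cons.1 hnd).1 (h ▸ hi))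
      simp [List.prod_eq_one this]
    · have ha : f a = 1 := h1 a (by simp) (fun h => (List.nodup_cons.1 hnd).1 (h ▸ hj'))
      simp [ha, ih hj' (List.nodup_cons.1 hnd).2 (fun i hi => h1 i (by simp [hi]))]

theorem pi_prod_mulSingle {n : ℕ} {Γ : Fin n → Type*} [∀ i, Group (Γ i)] (g : ∀ i, Γ i) :
    ((List.finRange n).map fun i => Pi.mulSingle i (g i)).prod = g := by
  funext j
  rw [Pi.list_prod_apply, List.map_map]
  have := prod_eq_of_unique (fun i => Pi.mulSingle i (g i) j) j (List.finRange n)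
    (List.mem_finRange j) (List.nodup_finRange n)
    (fun i _ hij => Pi.mulSingle_eq_of_ne (Ne.symm hij) _)
  simpa [Function.comp_def] using this

end PiDecomp

section Pairing

variable {G : Type*} [Group G] {S : Set G} {P : Type*}

/-- Pairing lemma: a product of letters each immediately corrected lands in `S`-words. -/
theorem pairing_wordLe (lv cv : P → G) :
    ∀ (v : List P), (∀ p ∈ v, lv p * cv p ∈ S ∨ (lv p * cv p)⁻¹ ∈ S) →
      (∀ p ∈ v, ∀ q ∈ v, Commute (cv p) (lv q)) →
      WordLe S ((v.map lv).prod * (v.map cv).prod) v.length := by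
  intro v
  induction v with
  | nil => simpa using wordLe_one
  | cons p v ih =>
    intro hmem hcomm
    have hc : Commute (cv p) ((v.map lv).prod) := by
      apply Commute.list_prod_right
      intro x hx
      obtain ⟨q, hq, rfl⟩ := List.mem_map.1 hx
      exact hcomm p (by simp) q (by simp [hq])
    have key : ((p :: v).map lv).prod * ((p :: v).map cv).prod
        = (lv p * cv p) * ((v.map lv).prod * (v.map cv).prod) := by
      simp only [List.map_cons, List.prod_cons]
      rw [mul_assoc, ← mul_assoc ((v.map lv).prod) (cv p), ← hc.eq]
      group
    rw [key]
    have h1 : WordLe S (lv p * cv p) 1 := ⟨[lv p * cv p], by simp, by simpa using hmem p (by simp), by simp⟩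
    have h2 := ih (fun q hq => hmem q (by simp [hq])) (fun a ha b hb => hcomm a (by simp [ha]) b (by simp [hb]))
    simpa [List.length_cons, Nat.add_comm] using h1.mul h2

end Pairing

section CoreQuad

variable {G : Type*} [Group G] {κ : Type*} [DecidableEq κ] {S : Set G}

private theorem count_aux {κ : Type*} [DecidableEq κ] (a a' : κ) (s : Bool) (α β : List (κ × Bool))
    (h : ((a,s)::(α ++ (a,!s)::β)).count (a',true) = ((a,s)::(α++(a,!s)::β)).count (a',false)) :
    (α++β).count (a',true) = (α++β).count (a',false) := by
  simp only [List.count_cons, List.count_append] at h ⊢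
  cases s <;> by_cases ha : a' = a <;>
    simp only [ha, Prod.mk.injEq, and_true, and_false, if_true, if_false, Bool.not_false,
      Bool.not_true, reduceCtorEq, if_neg, eq_self_iff_true] at h <;>
  · simp_all
    omega

/-- The quadratic-cost sorting lemma. -/
theorem core_quad (Zl Hl : κ × Bool → G)
    (hZneg : ∀ a s, Zl (a, !s) = (Zl (a, s))⁻¹)
    (hsplit : ∀ p, ∃ r, Hl p = Zl p * r ∧ ∀ q, Commute r (Zl q))
    (hHS : ∀ p, Hl p ∈ S ∨ (Hl p)⁻¹ ∈ S)
    (hCS : ∀ p q, Zl p * Hl q * (Zl p)⁻¹ ∈ S ∨ (Zl p * Hl q * (Zl p)⁻¹)⁻¹ ∈ S) :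
    ∀ (m : ℕ) (u : List (κ × Bool)), u.length = m →
      (∀ a, u.count (a, true) = u.count (a, false)) →
      WordLe S ((u.map Zl).prod) (m * m) := by
  intro m
  induction m using Nat.strong_induction_on with
  | _ m IH =>
  rintro u hlen hbal
  match u, hlen with
  | [], hlen => simpa [← hlen] using wordLe_one
  | (a, s) :: t, hlen =>
    -- find the matching letter
    have hmt : (a, !s) ∈ t := by
      have h1 : 0 < ((a, s) :: t).count (a, s) := List.count_pos_iff.2 (by simp)
      have h2 : ((a, s) :: t).count (a, !s) = ((a, s) :: t).count (a, s) := by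
        cases s
        · exact hbal a
        · exact (hbal a).symm
      have hne : ((a, !s) : κ × Bool) ≠ (a, s) := by simp
      have h3 : t.count (a, !s) = ((a, s) :: t).count (a, !s) := by
        simp [List.count_cons, hne]
      exact List.count_pos_iff.1 (by omega)
    obtain ⟨α, β, rfl⟩ := List.append_of_mem hmt
    -- split off the commutator
    obtain ⟨R, hKR, hRcomm⟩ : ∃ R, ((α.map Hl).prod) = ((α.map Zl).prod) * R ∧
        ∀ q, Commute R (Zl q) := by
      clear hbal hlen hmt IH
      induction α with
      | nil => exact ⟨1, by simp, by simp⟩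
      | cons q α ih =>
        obtain ⟨R, hR, hRc⟩ := ih
        obtain ⟨r, hr, hrc⟩ := hsplit q
        refine ⟨r * R, ?_, fun q' => (hrc q').mul_left (hRc q')⟩
        have hrA : Commute r ((α.map Zl).prod) := by
          apply Commute.list_prod_right
          intro x hx
          obtain ⟨q', _, rfl⟩ := List.mem_map.1 hx
          exact hrc q'
        simp only [List.map_cons, List.prod_cons, hR, hr]
        rw [mul_assoc (Zl q) r, ← mul_assoc r, hrA.eq]
        group
    set X := Zl (a, s) with hX
    set Aprod := (α.map Zl).prod
    set Bprod := (β.map Zl).prod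
    set K := (α.map Hl).prod
    have hXinv : Zl (a, !s) = X⁻¹ := hZneg a s
    have hcommRX : Commute R X := hRcomm (a, s)
    -- main algebraic identity
    have hmain : ((((a, s) :: (α ++ (a, !s) :: β)).map Zl).prod)
        = (X * K * X⁻¹ * K⁻¹) * (((α ++ β).map Zl).prod) := by
      simp only [List.map_cons, List.map_append, List.prod_cons, List.prod_append, hXinv]
      rw [hKR]
      have : X * (Aprod * R) * X⁻¹ * (Aprod * R)⁻¹ = X * Aprod * X⁻¹ * Aprod⁻¹ := by
        rw [mul_inv_rev]
        have := hcommRX.inv_right.eq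
        calc X * (Aprod * R) * X⁻¹ * (R⁻¹ * Aprod⁻¹)
            = X * Aprod * (R * X⁻¹ * R⁻¹) * Aprod⁻¹ := by group
          _ = X * Aprod * (X⁻¹ * R * R⁻¹) * Aprod⁻¹ := by rw [hcommRX.inv_right.eq]
          _ = X * Aprod * X⁻¹ * Aprod⁻¹ := by group
      rw [this]
      simp only [X, Aprod]
      group
    rw [hmain]
    -- cost of commutator part
    have hconj : WordLe S (X * K * X⁻¹) α.length := by
      have : X * K * X⁻¹ = ((α.map fun q => X * Hl q * X⁻¹).prod) := by
        have := List.prod_hom (α.map Hl) (MulAut.conj X).toMonoidHom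
        simp only [MulEquiv.toMonoidHom_eq_coe, List.map_map] at this
        simpa [MulAut.conj_apply, Function.comp_def] using this.symm
      rw [this]
      have hw := wordLe_prod (S := S) (α.map fun q => X * Hl q * X⁻¹) (by
        intro x hx
        obtain ⟨q, _, rfl⟩ := List.mem_map.1 hx
        exact hCS (a, s) q)
      simpa using hw
    have hKinv : WordLe S K⁻¹ α.length :=
      (by simpa using wordLe_prod (α.map Hl) (by
        intro x hx
        obtain ⟨q, _, rfl⟩ := List.mem_map.1 hx
        exact hHS q) : WordLe S K α.length).inv
    -- recursion
    have hlen2 : (α ++ β).length = m - 2 := by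
      simp only [List.length_cons, List.length_append] at hlen ⊢
      omega
    have hbal2 : ∀ a', (α ++ β).count (a', true) = (α ++ β).count (a', false) := by
      intro a'
      exact count_aux a a' s α β (hbal a')
    have hm2 : m - 2 < m := by
      have : 2 ≤ m := by simp only [List.length_cons, List.length_append] at hlen; omega
      omega
    have hrec := IH (m - 2) hm2 (α ++ β) hlen2 hbal2
    have hcost := ((hconj.mul hKinv).mul hrec)
    refine hcost.mono ?_
    have hα : α.length ≤ m - 2 := by
      simp only [List.length_cons, List.length_append] at hlen; omega
    have h2m : 2 ≤ m := by simp only [List.length_cons, List.length_append] at hlen; omega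
    nlinarith [Nat.sub_add_cancel h2m]

end CoreQuad

section Stage

theorem stage_lemma {n : ℕ} {Γ : Fin n → Type*} [∀ i, Group (Γ i)] {A : Type*} [AddCommGroup A]
    {κ : Type*} (b : κ → A) (θ : (∀ i, Γ i) →* Multiplicative A) (z : ∀ i, κ → Γ i)
    (S₀ : Set (∀ i, Γ i)) {i j : Fin n} (Alph : Set (Γ i)) (cw : Γ i → List (κ × Bool)) (B : ℕ)
    (hij : j ≠ i)
    (hpair : ∀ x ∈ Alph, Pi.mulSingle i x * Pi.mulSingle j (zword (z j) (cw x)) ∈ S₀)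
    (hcwlen : ∀ x ∈ Alph, (cw x).length ≤ B)
    (hcwsum : ∀ x : Γ i, wsum b (cw x) = -(Multiplicative.toAdd (θ (Pi.mulSingle i x))))
    (v : List (Γ i)) (hv : ∀ x ∈ v, x ∈ Alph) :
    WordLe S₀ (Pi.mulSingle i v.prod * Pi.mulSingle j (zword (z j) (v.flatMap cw))) v.length
    ∧ wsum b (v.flatMap cw) = -(Multiplicative.toAdd (θ (Pi.mulSingle i v.prod)))
    ∧ (v.flatMap cw).length ≤ B * v.length := by
  refine ⟨?_, ?_, ?_⟩
  · have hp := pairing_wordLe (S := S₀) (fun x : Γ i => Pi.mulSingle i x)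
      (fun x => Pi.mulSingle j (zword (z j) (cw x))) v
      (fun p hp => Or.inl (hpair p (hv p hp)))
      (fun p _ q _ => Pi.mulSingle_commute hij _ _)
    have h1 : (v.map fun x : Γ i => Pi.mulSingle i x).prod = Pi.mulSingle i v.prod := by
      have := List.prod_hom v (MonoidHom.mulSingle Γ i)
      simpa using this
    have h2 : (v.map fun x => Pi.mulSingle j (zword (z j) (cw x))).prod
        = Pi.mulSingle j (zword (z j) (v.flatMap cw)) := by
      rw [zword_bind]
      have := List.prod_hom (v.map fun x => zword (z j) (cw x)) (MonoidHom.mulSingle Γ j)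
      rw [List.map_map] at this
      simpa [Function.comp_def] using this
    rw [h1, h2] at hp
    exact hp
  · induction v with
    | nil => simp [wsum_bind]
    | cons x v ih =>
      rw [List.flatMap_cons, wsum_append, ih (fun y hy => hv y (by simp [hy])), hcwsum x]
      have : Pi.mulSingle i (List.prod (x :: v)) = Pi.mulSingle i x * Pi.mulSingle i v.prod := by
        rw [List.prod_cons, Pi.mulSingle_mul]
      rw [this, map_mul]
      simp [add_comm]
  · induction v with
    | nil => simp
    | cons x v ih =>
      rw [List.flatMap_cons, List.length_append]
      have h1 := hcwlen x (hv x (by simp))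
      have h2 := ih (fun y hy => hv y (by simp [hy]))
      simp only [List.length_cons]
      calc (cw x).length + (v.flatMap cw).length ≤ B + B * v.length := Nat.add_le_add h1 h2
        _ = B * (v.length + 1) := by ring

end Stage

section Lift

variable {G : Type*} [Group G]

theorem wordle_lift (K : Subgroup G) (S : Set K) (S₀ : Set G) (hS₀ : (S₀ : Set G) ⊆ K) (C₁ : ℕ)
    (hC : ∀ s (hs : s ∈ S₀), WordLe S (⟨s, hS₀ hs⟩ : K) C₁) :
    ∀ (L : List G), (∀ x ∈ L, x ∈ S₀ ∨ x⁻¹ ∈ S₀) → ∀ (g : K), (g : G) = L.prod →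
      WordLe S g (C₁ * L.length) := by
  intro L
  induction L with
  | nil =>
    intro _ g hg
    have : g = 1 := Subtype.ext (by simpa using hg)
    rw [this]
    exact wordLe_one.mono (by simp)
  | cons x L ih =>
    intro hmem g hg
    have hxK : x ∈ K := by
      rcases hmem x (by simp) with h | h
      · exact hS₀ h
      · simpa using K.inv_mem (hS₀ h)
    have hLK : L.prod ∈ K := by
      have : L.prod = x⁻¹ * (g : G) := by rw [hg, List.prod_cons, inv_mul_cancel_left]
      rw [this]
      exact K.mul_mem (K.inv_mem hxK) g.2
    have hgsplit : g = (⟨x, hxK⟩ : K) * ⟨L.prod, hLK⟩ := by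
      apply Subtype.ext
      simp [hg, List.prod_cons]
    have hx1 : WordLe S (⟨x, hxK⟩ : K) C₁ := by
      rcases hmem x (by simp) with h | h
      · exact hC x h
      · have := (hC x⁻¹ h).inv
        have heq : ((⟨x⁻¹, hS₀ h⟩ : K))⁻¹ = (⟨x, hxK⟩ : K) := by
          apply Subtype.ext; simp
        rwa [heq] at this
    have hL1 := ih (fun y hy => hmem y (by simp [hy])) ⟨L.prod, hLK⟩ rfl
    rw [hgsplit]
    refine (hx1.mul hL1).mono ?_
    simp [List.length_cons, Nat.mul_succ, Nat.add_comm]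

theorem mem_closure_lift (K : Subgroup G) (S₀ : Set G) (hS₀ : S₀ ⊆ K) :
    ∀ (L : List G), (∀ x ∈ L, x ∈ S₀ ∨ x⁻¹ ∈ S₀) → ∀ (g : K), (g : G) = L.prod →
      g ∈ Subgroup.closure {x : K | (x : G) ∈ S₀} := by
  intro L
  induction L with
  | nil =>
    intro _ g hg
    have : g = 1 := Subtype.ext (by simpa using hg)
    rw [this]; exact Subgroup.one_mem _
  | cons x L ih =>
    intro hmem g hg
    have hxK : x ∈ K := by
      rcases hmem x (by simp) with h | h
      · exact hS₀ h
      · simpa using K.inv_mem (hS₀ h)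
    have hLK : L.prod ∈ K := by
      have : L.prod = x⁻¹ * (g : G) := by rw [hg, List.prod_cons, inv_mul_cancel_left]
      rw [this]
      exact K.mul_mem (K.inv_mem hxK) g.2
    have hgsplit : g = (⟨x, hxK⟩ : K) * ⟨L.prod, hLK⟩ := by
      apply Subtype.ext
      simp [hg, List.prod_cons]
    have hx1 : (⟨x, hxK⟩ : K) ∈ Subgroup.closure {x : K | (x : G) ∈ S₀} := by
      rcases hmem x (by simp) with h | h
      · exact Subgroup.subset_closure h
      · have : ((⟨x, hxK⟩ : K))⁻¹ ∈ {x : K | (x : G) ∈ S₀} := by simpa using h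
        simpa using Subgroup.inv_mem _ (Subgroup.subset_closure this)
    rw [hgsplit]
    exact Subgroup.mul_mem _ hx1 (ih (fun y hy => hmem y (by simp [hy])) ⟨L.prod, hLK⟩ rfl)

end Lift

set_option maxHeartbeats 1600000

/-- If `θ : Γ₁ × … × Γₙ → A` (`n ≥ 2`, each `Γᵢ` finitely generated, `A` finitely generated
free abelian) restricts to a surjection on every coordinate subgroup, then `ker θ` is finitely
generated and has quadratically bounded distortion in the direct product. -/
theorem kernel_fg_and_quadratic_distortion
    (n : ℕ) (hn : 2 ≤ n) (Γ : Fin n → Type) [∀ i, Group (Γ i)]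
    (hfg : ∀ i, Group.FG (Γ i))
    (A : Type) [AddCommGroup A] [Module.Free ℤ A] [Module.Finite ℤ A]
    (θ : (∀ i, Γ i) →* Multiplicative A)
    (hsurj : ∀ i, Function.Surjective (θ.comp (MonoidHom.mulSingle Γ i))) :
    Group.FG θ.ker ∧
      ∀ (T : Set (∀ i, Γ i)), T.Finite → Subgroup.closure T = ⊤ →
      ∀ (S : Set θ.ker), S.Finite → Subgroup.closure S = ⊤ →
        ∃ C : ℕ, ∀ (l : ℕ) (h : θ.ker),
          wordLength T (h : ∀ i, Γ i) ≤ l → wordLength S h ≤ C * l ^ 2 := by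
  classical
  -- choose a basis of A
  let κ := Module.Free.ChooseBasisIndex ℤ A
  let b : Module.Basis κ ℤ A := Module.Free.chooseBasis ℤ A
  have hn0 : 0 < n := by omega
  have hn1 : 1 < n := by omega
  let i0 : Fin n := ⟨0, hn0⟩
  let i1 : Fin n := ⟨1, hn1⟩
  have hi1i0 : i1 ≠ i0 := by simp [i0, i1, Fin.ext_iff]
  -- choose lifts of basis elements in each coordinate
  have hz' : ∀ (i : Fin n) (a : κ), ∃ x : Γ i, θ (Pi.mulSingle i x) = Multiplicative.ofAdd (b a) := by
    intro i a
    obtain ⟨x, hx⟩ := hsurj i (Multiplicative.ofAdd (b a))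
    exact ⟨x, by simpa using hx⟩
  choose z hz using hz'
  -- representing words for elements of A
  have hrep' : ∀ c : A, ∃ u : List (κ × Bool), wsum (⇑b) u = c :=
    exists_word_wsum (⇑b) (basis_closure_top b)
  choose rep hrepr using hrep'
  -- the θ-value of an injected z-word
  have hzw : ∀ (j : Fin n) (u : List (κ × Bool)),
      θ (Pi.mulSingle j (zword (z j) u)) = Multiplicative.ofAdd (wsum (⇑b) u) := by
    intro j u
    have h0 : θ (Pi.mulSingle j (zword (z j) u))
        = (θ.comp (MonoidHom.mulSingle Γ j)) (zword (z j) u) := rfl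
    rw [h0, map_zword]
    have he : (fun a => (θ.comp (MonoidHom.mulSingle Γ j)) (z j a))
        = fun a => Multiplicative.ofAdd (b a) := by
      funext a
      simpa using hz j a
    rw [he, zword_ofAdd]
  -- the tail products
  let tl : (∀ i, Γ i) → ℕ → (∀ i, Γ i) := fun g k =>
    (((List.finRange n).drop k).map fun i => Pi.mulSingle i (g i)).prod
  have htl0 : ∀ g, tl g 0 = g := fun g => by
    show (((List.finRange n).drop 0).map fun i => Pi.mulSingle i (g i)).prod = g
    rw [List.drop_zero]
    exact pi_prod_mulSingle g
  have htln : ∀ g, tl g n = 1 := by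
    intro g
    show (((List.finRange n).drop n).map fun i => Pi.mulSingle i (g i)).prod = 1
    have : (List.finRange n).drop n = [] := by
      apply List.drop_eq_nil_of_le
      simp
    rw [this]
    simp
  have htlsucc : ∀ g (k : ℕ) (hk : k < n),
      tl g k = Pi.mulSingle (⟨k, hk⟩ : Fin n) (g ⟨k, hk⟩) * tl g (k + 1) := by
    intro g k hk
    have hlt : k < (List.finRange n).length := by simpa using hk
    show (((List.finRange n).drop k).map fun i => Pi.mulSingle i (g i)).prod = _
    rw [List.drop_eq_getElem_cons hlt]
    have hk' : (List.finRange n)[k] = (⟨k, hk⟩ : Fin n) := by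
      simp [List.getElem_finRange, Fin.ext_iff]
    rw [List.map_cons, List.prod_cons, hk']
  -- ============ the key construction ============
  have key : ∀ T : Set (∀ i, Γ i), T.Finite →
      ∃ S₀ : Set (∀ i, Γ i), S₀.Finite ∧ (∀ g ∈ S₀, θ g = 1) ∧ ∃ C₄ : ℕ,
        ∀ (l : ℕ) (h : ∀ i, Γ i), θ h = 1 → WordLe T h l →
          WordLe S₀ h (C₄ * l + (C₄ * l) * (C₄ * l)) := by
    intro T hTfin
    let Alph : ∀ i : Fin n, Set (Γ i) := fun i =>
      ((fun t : ∀ i, Γ i => t i) '' (T ∪ T⁻¹)) ∪ (⋃ a : κ, {z i a, (z i a)⁻¹})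
    have hAlphFin : ∀ i, (Alph i).Finite := by
      intro i
      apply Set.Finite.union
      · exact (hTfin.union hTfin.inv).image _
      · exact Set.finite_iUnion fun a => (Set.finite_singleton _).insert _
    have hzAlph : ∀ (i : Fin n) (p : κ × Bool),
        (cond p.2 (z i p.1) (z i p.1)⁻¹) ∈ Alph i := by
      intro i p
      refine Or.inr (Set.mem_iUnion.2 ⟨p.1, ?_⟩)
      cases hp2 : p.2 <;> simp
    let cw : ∀ i : Fin n, Γ i → List (κ × Bool) := fun i x =>
      rep (-(Multiplicative.toAdd (θ (Pi.mulSingle i x))))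
    let pairElt : ∀ (i j : Fin n), Γ i → (∀ i, Γ i) := fun i j x =>
      Pi.mulSingle i x * Pi.mulSingle j (zword (z j) (cw i x))
    let zhat : κ → ∀ i, Γ i := fun a =>
      Pi.mulSingle i0 (z i0 a) * (Pi.mulSingle i1 (z i1 a))⁻¹
    let Zl : κ × Bool → ∀ i, Γ i := fun p =>
      Pi.mulSingle i0 (cond p.2 (z i0 p.1) (z i0 p.1)⁻¹)
    let Hl : κ × Bool → ∀ i, Γ i := fun p => cond p.2 (zhat p.1) (zhat p.1)⁻¹
    let S₀ : Set (∀ i, Γ i) :=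
      ((⋃ i, ⋃ j, pairElt i j '' Alph i) ∪ Set.range zhat) ∪
        ⋃ p : κ × Bool, ⋃ q : κ × Bool, {Zl p * Hl q * (Zl p)⁻¹}
    have hS₀fin : S₀.Finite := by
      refine (Set.Finite.union (Set.Finite.union ?_ ?_) ?_)
      · exact Set.finite_iUnion fun i => Set.finite_iUnion fun j => ((hAlphFin i).image _)
      · exact Set.finite_range _
      · exact Set.finite_iUnion fun p => Set.finite_iUnion fun q => Set.finite_singleton _
    have hmemPair : ∀ (i j : Fin n) (x : Γ i), x ∈ Alph i → pairElt i j x ∈ S₀ := fun i j x hx =>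
      Or.inl (Or.inl (Set.mem_iUnion.2 ⟨i, Set.mem_iUnion.2 ⟨j, ⟨x, hx, rfl⟩⟩⟩))
    have hmemZhat : ∀ a, zhat a ∈ S₀ := fun a => Or.inl (Or.inr ⟨a, rfl⟩)
    have hmemConj : ∀ p q, Zl p * Hl q * (Zl p)⁻¹ ∈ S₀ := fun p q =>
      Or.inr (Set.mem_iUnion.2 ⟨p, Set.mem_iUnion.2 ⟨q, rfl⟩⟩)
    have hzhatker : ∀ a, θ (zhat a) = 1 := by
      intro a
      show θ (Pi.mulSingle i0 (z i0 a) * (Pi.mulSingle i1 (z i1 a))⁻¹) = 1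
      rw [map_mul, map_inv, hz, hz]
      group
    have hHlker : ∀ q, θ (Hl q) = 1 := by
      rintro ⟨a, s⟩
      cases s
      · show θ ((zhat a)⁻¹) = 1
        rw [map_inv, hzhatker]
        group
      · exact hzhatker a
    have hpairker : ∀ (i j : Fin n) (x : Γ i), θ (pairElt i j x) = 1 := by
      intro i j x
      show θ (Pi.mulSingle i x * Pi.mulSingle j (zword (z j) (cw i x))) = 1
      rw [map_mul, hzw]
      show θ (Pi.mulSingle i x) * Multiplicative.ofAdd
        (wsum (⇑b) (rep (-(Multiplicative.toAdd (θ (Pi.mulSingle i x)))))) = 1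
      rw [hrepr]
      simp
    have hS₀ker : ∀ g ∈ S₀, θ g = 1 := by
      rintro g ((h | h) | h)
      · simp only [Set.mem_iUnion] at h
        obtain ⟨i, j, x, hx, rfl⟩ := h
        exact hpairker i j x
      · obtain ⟨a, rfl⟩ := h
        exact hzhatker a
      · simp only [Set.mem_iUnion, Set.mem_singleton_iff] at h
        obtain ⟨p, q, rfl⟩ := h
        rw [map_mul, map_mul, map_inv, hHlker]
        group
    -- the length bound for correction words of alphabet letters
    let B : ℕ := Finset.univ.sup fun i : Fin n =>
      (hAlphFin i).toFinset.sup fun x => (cw i x).length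
    have hB : ∀ (i : Fin n), ∀ x ∈ Alph i, (cw i x).length ≤ B := by
      intro i x hx
      calc (cw i x).length
          ≤ (hAlphFin i).toFinset.sup (fun x => (cw i x).length) :=
            Finset.le_sup (f := fun x : Γ i => (cw i x).length) ((hAlphFin i).mem_toFinset.2 hx)
        _ ≤ B := Finset.le_sup (f := fun i : Fin n =>
            (hAlphFin i).toFinset.sup fun x => (cw i x).length) (Finset.mem_univ i)
    -- the one-coordinate stage
    have hstage : ∀ (i j : Fin n), j ≠ i → ∀ (v : List (Γ i)), (∀ x ∈ v, x ∈ Alph i) →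
        WordLe S₀ (Pi.mulSingle i v.prod *
          Pi.mulSingle j (zword (z j) (v.flatMap (cw i)))) v.length
        ∧ wsum (⇑b) (v.flatMap (cw i)) = -(Multiplicative.toAdd (θ (Pi.mulSingle i v.prod)))
        ∧ (v.flatMap (cw i)).length ≤ B * v.length := by
      intro i j hij v hv
      refine stage_lemma (⇑b) θ z S₀ (Alph i) (cw i) B hij ?_ (fun x hx => hB i x hx)
        (fun x => hrepr _) v hv
      intro x hx
      exact hmemPair i j x hx
    -- the combination over coordinates
    have comb : ∀ (m l : ℕ) (k : ℕ) (hk : k < n), n - k = m → ∀ (g : ∀ i, Γ i)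
        (w : ∀ i : Fin n, List (Γ i)),
        (∀ i, ∀ x ∈ w i, x ∈ Alph i) → (∀ i, (w i).prod = g i) → (∀ i, (w i).length ≤ l) →
        ∀ c : List (κ × Bool),
        ∃ (P : ∀ i, Γ i) (u : List (κ × Bool)),
          Pi.mulSingle (⟨k, hk⟩ : Fin n) (zword (z ⟨k, hk⟩) c * g ⟨k, hk⟩) * tl g (k + 1)
            = P * Pi.mulSingle i0 (zword (z i0) u)
          ∧ WordLe S₀ P ((B + 2) ^ m * (c.length + l))
          ∧ u.length ≤ (B + 2) ^ m * (c.length + l) := by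
      intro m
      induction m with
      | zero =>
        intro l k hk hm
        exact absurd hm (by omega)
      | succ m IH =>
        intro l k hk hm g w hw hwp hwl c
        set i' : Fin n := ⟨k, hk⟩ with hi'def
        set v : List (Γ i') := (c.map fun p => cond p.2 (z i' p.1) (z i' p.1)⁻¹) ++ w i'
          with hvdef
        have hvAlph : ∀ x ∈ v, x ∈ Alph i' := by
          intro x hx
          rcases List.mem_append.1 hx with h | h
          · obtain ⟨p, _, rfl⟩ := List.mem_map.1 h
            exact hzAlph i' p
          · exact hw i' x h
        have hvprod : v.prod = zword (z i') c * g i' := by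
          rw [hvdef, List.prod_append]
          congr 1
          exact hwp i'
        have hvlen : v.length ≤ c.length + l := by
          rw [hvdef]
          simp only [List.length_append, List.length_map]
          exact Nat.add_le_add le_rfl (hwl i')
        have hone : 1 ≤ (B + 2) ^ m := Nat.one_le_pow _ _ (by omega)
        by_cases hkn : k + 1 < n
        · -- recursive case
          set j' : Fin n := ⟨k + 1, hkn⟩ with hj'def
          have hj'i' : j' ≠ i' := by
            intro hEq
            have hv : k + 1 = k := congrArg Fin.val hEq
            omega
          obtain ⟨hst1, hst2, hst3⟩ := hstage i' j' hj'i' v hvAlph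
          set u₁ : List (κ × Bool) := v.flatMap (cw i') with hu₁def
          set c' : List (κ × Bool) := (u₁.map fun p => (p.1, !p.2)).reverse with hc'def
          have hc'len : c'.length ≤ B * (c.length + l) := by
            rw [hc'def]
            simp only [List.length_reverse, List.length_map]
            calc u₁.length ≤ B * v.length := hst3
              _ ≤ B * (c.length + l) := Nat.mul_le_mul le_rfl hvlen
          obtain ⟨P₂, u, hP₂eq, hP₂len, hulen⟩ :=
            IH l (k + 1) hkn (by omega) g w hw hwp hwl c'
          have e1 : zword (z j') c' = (zword (z j') u₁)⁻¹ := zword_negrev _ _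
          rw [e1] at hP₂eq
          refine ⟨Pi.mulSingle i' v.prod * Pi.mulSingle j' (zword (z j') u₁) * P₂, u, ?_, ?_, ?_⟩
          · rw [← hvprod, htlsucc g (k + 1) hkn]
            calc Pi.mulSingle i' v.prod *
                  (Pi.mulSingle (⟨k+1, hkn⟩ : Fin n) (g ⟨k+1, hkn⟩) * tl g (k + 1 + 1))
                = Pi.mulSingle i' v.prod * (Pi.mulSingle j' (zword (z j') u₁) *
                    (Pi.mulSingle j' ((zword (z j') u₁)⁻¹ * g j') * tl g (k + 1 + 1))) := by
                  rw [Pi.mulSingle_mul, Pi.mulSingle_inv]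
                  group
                  rfl
              _ = Pi.mulSingle i' v.prod * (Pi.mulSingle j' (zword (z j') u₁) *
                    (P₂ * Pi.mulSingle i0 (zword (z i0) u))) := by rw [hP₂eq]
              _ = Pi.mulSingle i' v.prod * Pi.mulSingle j' (zword (z j') u₁) * P₂ *
                    Pi.mulSingle i0 (zword (z i0) u) := by group
          · have harith : (c.length + l) + (B + 2) ^ m * (c'.length + l)
                ≤ (B + 2) ^ (m + 1) * (c.length + l) := by
              have h1 : (B + 2) ^ m * (c'.length + l)
                  ≤ (B + 2) ^ m * ((B + 1) * (c.length + l)) := by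
                apply Nat.mul_le_mul le_rfl
                calc c'.length + l ≤ B * (c.length + l) + l := Nat.add_le_add hc'len le_rfl
                  _ ≤ (B + 1) * (c.length + l) := by nlinarith
              calc (c.length + l) + (B + 2) ^ m * (c'.length + l)
                  ≤ (B + 2) ^ m * (c.length + l) + (B + 2) ^ m * ((B + 1) * (c.length + l)) := by
                    refine Nat.add_le_add ?_ h1
                    nlinarith
                _ = (B + 2) ^ (m + 1) * (c.length + l) := by ring
            refine ((hst1.mono hvlen).mul hP₂len).mono ?_
            exact harith
          · calc u.length ≤ (B + 2) ^ m * (c'.length + l) := hulen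
              _ ≤ (B + 2) ^ m * ((B + 1) * (c.length + l)) := by
                  apply Nat.mul_le_mul le_rfl
                  calc c'.length + l ≤ B * (c.length + l) + l := Nat.add_le_add hc'len le_rfl
                    _ ≤ (B + 1) * (c.length + l) := by nlinarith
              _ ≤ (B + 2) ^ (m + 1) * (c.length + l) := by
                  rw [pow_succ]
                  nlinarith
        · -- base case : k = n - 1, correction goes to coordinate 0
          have hk1n : k + 1 = n := by omega
          have hi0i' : i0 ≠ i' := by
            intro hEq
            have hv : (0 : ℕ) = k := congrArg Fin.val hEq
            omega
          obtain ⟨hst1, hst2, hst3⟩ := hstage i' i0 hi0i' v hvAlph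
          set u₁ : List (κ × Bool) := v.flatMap (cw i') with hu₁def
          refine ⟨Pi.mulSingle i' v.prod * Pi.mulSingle i0 (zword (z i0) u₁),
            (u₁.map fun p => (p.1, !p.2)).reverse, ?_, ?_, ?_⟩
          · have e1 : zword (z i0) ((u₁.map fun p => (p.1, !p.2)).reverse)
                = (zword (z i0) u₁)⁻¹ := zword_negrev _ _
            rw [e1, ← hvprod]
            have e2 : tl g (k + 1) = 1 := by rw [hk1n, htln]
            rw [e2, Pi.mulSingle_inv]
            group
          · refine (hst1.mono hvlen).mono ?_
            calc c.length + l = 1 * (c.length + l) := by ring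
              _ ≤ (B + 2) ^ (m + 1) * (c.length + l) :=
                  Nat.mul_le_mul (Nat.one_le_pow _ _ (by omega)) le_rfl
          · simp only [List.length_reverse, List.length_map]
            calc u₁.length ≤ B * v.length := hst3
              _ ≤ B * (c.length + l) := Nat.mul_le_mul le_rfl hvlen
              _ ≤ (B + 2) ^ (m + 1) * (c.length + l) := by
                  refine Nat.mul_le_mul ?_ le_rfl
                  calc B ≤ B + 2 := by omega
                    _ ≤ (B + 2) ^ (m + 1) := Nat.le_self_pow (by omega) _
    -- core_quad hypotheses
    have hZneg : ∀ (a : κ) (s : Bool), Zl (a, !s) = (Zl (a, s))⁻¹ := by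
      intro a s
      cases s <;> show Pi.mulSingle i0 _ = (Pi.mulSingle i0 _)⁻¹ <;>
        simp [Pi.mulSingle_inv]
    have hsplit : ∀ p, ∃ r, Hl p = Zl p * r ∧ ∀ q, Commute r (Zl q) := by
      rintro ⟨a, s⟩
      have hcomm : Commute (Pi.mulSingle i0 (z i0 a)) (Pi.mulSingle i1 (z i1 a)) :=
        (Pi.mulSingle_commute hi1i0 (z i1 a) (z i0 a)).symm
      cases s
      · refine ⟨Pi.mulSingle i1 (z i1 a), ?_, fun q => ?_⟩
        · show (zhat a)⁻¹ = Pi.mulSingle i0 (z i0 a)⁻¹ * Pi.mulSingle i1 (z i1 a)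
          show (Pi.mulSingle i0 (z i0 a) * (Pi.mulSingle i1 (z i1 a))⁻¹)⁻¹ = _
          rw [mul_inv_rev, inv_inv, Pi.mulSingle_inv]
          exact (hcomm.inv_left.symm).eq
        · exact Pi.mulSingle_commute hi1i0 _ _
      · refine ⟨(Pi.mulSingle i1 (z i1 a))⁻¹, rfl, fun q => ?_⟩
        exact (Pi.mulSingle_commute hi1i0 _ _).inv_left
    have hHS : ∀ p, Hl p ∈ S₀ ∨ (Hl p)⁻¹ ∈ S₀ := by
      rintro ⟨a, s⟩
      cases s
      · right
        show ((zhat a)⁻¹)⁻¹ ∈ S₀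
        rw [inv_inv]
        exact hmemZhat a
      · exact Or.inl (hmemZhat a)
    have hCS : ∀ p q, Zl p * Hl q * (Zl p)⁻¹ ∈ S₀ ∨ (Zl p * Hl q * (Zl p)⁻¹)⁻¹ ∈ S₀ :=
      fun p q => Or.inl (hmemConj p q)
    -- assemble key
    refine ⟨S₀, hS₀fin, hS₀ker, (B + 2) ^ n, ?_⟩
    intro l h hker hWL
    obtain ⟨w0, hw0len, hw0mem, hw0prod⟩ := hWL
    set w : ∀ i : Fin n, List (Γ i) := fun i => w0.map fun t => t i with hwdef
    have hwAlph : ∀ i, ∀ x ∈ w i, x ∈ Alph i := by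
      intro i x hx
      obtain ⟨t, ht, rfl⟩ := List.mem_map.1 hx
      rcases hw0mem t ht with h' | h'
      · exact Or.inl ⟨t, Or.inl h', rfl⟩
      · exact Or.inl ⟨t, Or.inr (by simpa [Set.mem_inv] using h'), rfl⟩
    have hwp : ∀ i, (w i).prod = h i := by
      intro i
      rw [← hw0prod, Pi.list_prod_apply]
    have hwl : ∀ i, (w i).length ≤ l := by
      intro i
      simpa [hwdef] using hw0len
    obtain ⟨P, u, hPeq, hPle, hule⟩ := comb n l 0 hn0 (by omega) h w hwAlph hwp hwl []
    have hL : Pi.mulSingle (⟨0, hn0⟩ : Fin n) (zword (z ⟨0, hn0⟩) [] * h ⟨0, hn0⟩) * tl h 1 = h := by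
      rw [zword_nil, one_mul, ← htlsucc h 0 hn0, htl0]
    have hhPQ : h = P * Pi.mulSingle i0 (zword (z i0) u) := by
      rw [← hL]
      exact hPeq
    have hS₀sub : S₀ ⊆ (θ.ker : Set (∀ i, Γ i)) := fun g hg => MonoidHom.mem_ker.2 (hS₀ker g hg)
    have hPker : θ P = 1 := MonoidHom.mem_ker.1 (hPle.prod_mem hS₀sub)
    have hQker : θ (Pi.mulSingle i0 (zword (z i0) u)) = 1 := by
      have h2 := hker
      rw [hhPQ, map_mul, hPker, one_mul] at h2
      exact h2
    have hwsum0 : wsum (⇑b) u = 0 := by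
      have h3 := hzw i0 u
      rw [hQker] at h3
      exact ofAdd_eq_one.1 h3.symm
    have hbal : ∀ a : κ, u.count (a, true) = u.count (a, false) := by
      intro a
      have h4 := repr_wsum b u a
      rw [hwsum0] at h4
      simp only [map_zero, Finsupp.coe_zero, Pi.zero_apply] at h4
      omega
    have hcore := core_quad (S := S₀) Zl Hl hZneg hsplit hHS hCS u.length u rfl hbal
    have hQ : (u.map Zl).prod = Pi.mulSingle i0 (zword (z i0) u) := by
      have h2 := List.prod_hom (u.map fun p => cond p.2 (z i0 p.1) (z i0 p.1)⁻¹)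
        (MonoidHom.mulSingle Γ i0)
      rw [List.map_map] at h2
      have h3 : ((u.map fun p => cond p.2 (z i0 p.1) (z i0 p.1)⁻¹).map
          (MonoidHom.mulSingle Γ i0)).prod
          = Pi.mulSingle i0 (zword (z i0) u) := by
        rw [List.map_map]
        exact h2
      rw [← h3, List.map_map]
      congr 1
    rw [hQ] at hcore
    rw [hhPQ]
    refine (hPle.mul hcore).mono ?_
    have h5 : u.length ≤ (B + 2) ^ n * l := by simpa using hule
    have h6 : (B + 2) ^ n * ([] : List (κ × Bool)).length + (B + 2) ^ n * l
        = (B + 2) ^ n * l := by simp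
    refine Nat.add_le_add (by simpa using le_rfl) ?_
    exact Nat.mul_le_mul h5 h5
  -- ============ conclusion ============
  constructor
  · -- finite generation of the kernel
    have hXf : ∀ i : Fin n, ∃ Xi : Set (Γ i), Subgroup.closure Xi = ⊤ ∧ Xi.Finite :=
      fun i => Group.fg_iff.1 (hfg i)
    choose X hXtop hXfin using hXf
    obtain ⟨S₀, hS₀fin, hS₀ker, C₄, hkey⟩ :=
      key (⋃ i, Pi.mulSingle i '' X i) (Set.finite_iUnion fun i => (hXfin i).image _)
    have hTDtop : Subgroup.closure (⋃ i, Pi.mulSingle i '' X i) = ⊤ := by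
      rw [eq_top_iff']
      intro g
      have hg : g = ((List.finRange n).map fun i => Pi.mulSingle i (g i)).prod :=
        (pi_prod_mulSingle g).symm
      rw [hg]
      apply list_prod_mem
      intro x hx
      obtain ⟨i, _, rfl⟩ := List.mem_map.1 hx
      have h1 : Pi.mulSingle i (g i)
          ∈ (Subgroup.closure (X i)).map (MonoidHom.mulSingle Γ i) :=
        Subgroup.mem_map_of_mem _ (by rw [hXtop i]; trivial)
      rw [MonoidHom.map_closure] at h1
      exact Subgroup.closure_mono (Set.subset_iUnion (fun i => Pi.mulSingle i '' X i) i) h1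
    have hS₀sub : S₀ ⊆ (θ.ker : Set (∀ i, Γ i)) :=
      fun g hg => MonoidHom.mem_ker.2 (hS₀ker g hg)
    rw [Group.fg_iff]
    refine ⟨{x : θ.ker | (x : ∀ i, Γ i) ∈ S₀}, ?_, ?_⟩
    · rw [eq_top_iff']
      intro hh
      have h1 : (hh : ∀ i, Γ i) ∈ Subgroup.closure (⋃ i, Pi.mulSingle i '' X i) := by
        rw [hTDtop]; trivial
      obtain ⟨k, hk⟩ := exists_wordLe_of_mem_closure h1
      obtain ⟨L, hLlen, hLmem, hLprod⟩ := hkey k (hh : ∀ i, Γ i)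
        (MonoidHom.mem_ker.1 hh.2) hk
      exact mem_closure_lift θ.ker S₀ hS₀sub L hLmem hh hLprod.symm
    · exact hS₀fin.preimage (Subtype.coe_injective.injOn)
  · -- distortion
    intro T hTfin hTtop S hSfin hStop
    obtain ⟨S₀, hS₀fin, hS₀ker, C₄, hkey⟩ := key T hTfin
    have hS₀sub : S₀ ⊆ (θ.ker : Set (∀ i, Γ i)) :=
      fun g hg => MonoidHom.mem_ker.2 (hS₀ker g hg)
    set F : (∀ i, Γ i) → ℕ := fun s =>
      if hs : θ s = 1 then wordLength S ⟨s, MonoidHom.mem_ker.2 hs⟩ else 0 with hFdef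
    obtain ⟨C₁, hC₁⟩ : ∃ C₁ : ℕ, ∀ s ∈ S₀, F s ≤ C₁ := by
      obtain ⟨C₁, hC₁⟩ := (hS₀fin.image F).bddAbove
      exact ⟨C₁, fun s hs => hC₁ (Set.mem_image_of_mem F hs)⟩
    have hCword : ∀ s (hs : s ∈ S₀), WordLe S (⟨s, hS₀sub hs⟩ : θ.ker) C₁ := by
      intro s hs
      have h1 : θ s = 1 := hS₀ker s hs
      apply wordLe_of_wordLength_le (by rw [hStop]; trivial)
      have h2 := hC₁ s hs
      rw [hFdef] at h2
      simpa [dif_pos h1] using h2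
    refine ⟨C₁ * (C₄ + C₄ * C₄), ?_⟩
    intro l h hlen
    have hWT : WordLe T ((h : ∀ i, Γ i)) l :=
      wordLe_of_wordLength_le (by rw [hTtop]; trivial) hlen
    have hW0 := hkey l (h : ∀ i, Γ i) (MonoidHom.mem_ker.1 h.2) hWT
    obtain ⟨L, hLlen, hLmem, hLprod⟩ := hW0
    have hlift := wordle_lift θ.ker S S₀ hS₀sub C₁ hCword L hLmem h hLprod.symm
    refine le_trans (wordLength_le_of_wordLe hlift) ?_
    have hll : l ≤ l * l := by
      rcases Nat.eq_zero_or_pos l with rfl | hl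
      · simp
      · calc l = l * 1 := by ring
          _ ≤ l * l := Nat.mul_le_mul le_rfl hl
    calc C₁ * L.length ≤ C₁ * (C₄ * l + (C₄ * l) * (C₄ * l)) := Nat.mul_le_mul le_rfl hLlen
      _ = C₁ * C₄ * l + C₁ * (C₄ * C₄) * (l * l) := by ring
      _ ≤ C₁ * C₄ * (l * l) + C₁ * (C₄ * C₄) * (l * l) :=
          Nat.add_le_add (Nat.mul_le_mul le_rfl hll) le_rfl
      _ = C₁ * (C₄ + C₄ * C₄) * l ^ 2 := by ring
end

section
/- Let H be a virtually-full, virtually-coabelian subgroup of a direct product D = Γ_1 × … × Γ_n. Then there exists a finite-index subgroup D' ≤ D such that, setting Γ_i' = Γ_i ∩ D' for each i and H' = H ∩ D', one has [D', D'] ≤ H' and Γ_i'·H' = D' for every i. -/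
open Subgroup

open Pointwise

/-- The range of `mulSingle` is a normal subgroup of the direct product. -/
lemma mulSingle_range_normal {n : ℕ} (Γ : Fin n → Type) [∀ i, Group (Γ i)] (i : Fin n) :
    ((MonoidHom.mulSingle Γ i).range).Normal := by
  constructor
  rintro x ⟨y, rfl⟩ g
  refine ⟨g i * y * (g i)⁻¹, ?_⟩
  funext j
  by_cases h : j = i
  · subst h; simp
  · simp [h]

/-- If `U` is normal, `N` is normal of finite index with `N ≤ U ⊔ V`, then
`(U ⊓ N) ⊔ (V ⊓ N)` has finite index. -/
lemma aux_finiteIndex {G : Type*} [Group G] (U V N : Subgroup G) [U.Normal] [N.Normal]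
    [N.FiniteIndex] (hNle : N ≤ U ⊔ V) : ((U ⊓ N) ⊔ (V ⊓ N)).FiniteIndex := by
  set W : Subgroup G := (U ⊓ N) ⊔ (V ⊓ N) with hW
  have hWN : W ≤ N := sup_le inf_le_right inf_le_right
  have hdec : ∀ d : N, ∃ p : G × G, p.1 ∈ U ∧ p.2 ∈ V ∧ p.1 * p.2 = (d : G) := by
    intro d
    have hd : (d : G) ∈ (↑U * ↑V : Set G) := by
      rw [← Subgroup.normal_mul]
      exact hNle d.2
    obtain ⟨u, hu, v, hv, huv⟩ := hd
    exact ⟨(u, v), hu, hv, huv⟩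
  -- the quotient `N ⧸ W` embeds into `(G ⧸ N) × (G ⧸ N)`
  have hfin : Finite (N ⧸ W.subgroupOf N) := by
    let f : (N ⧸ W.subgroupOf N) → (G ⧸ N) × (G ⧸ N) := fun c =>
      (((hdec c.out).choose.1 : G ⧸ N), ((hdec c.out).choose.2 : G ⧸ N))
    have hf : Function.Injective f := by
      intro c c' hcc
      obtain ⟨hu, hv, huv⟩ := (hdec c.out).choose_spec
      obtain ⟨hu', hv', huv'⟩ := (hdec c'.out).choose_spec
      set u := (hdec c.out).choose.1
      set v := (hdec c.out).choose.2
      set u' := (hdec c'.out).choose.1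
      set v' := (hdec c'.out).choose.2
      have h1 : u⁻¹ * u' ∈ N := QuotientGroup.eq.mp (congrArg Prod.fst hcc)
      have h2 : v⁻¹ * v' ∈ N := QuotientGroup.eq.mp (congrArg Prod.snd hcc)
      have h1U : u⁻¹ * u' ∈ U := mul_mem (inv_mem hu) hu'
      have h2V : v⁻¹ * v' ∈ V := mul_mem (inv_mem hv) hv'
      have hkey : ((c.out : G))⁻¹ * (c'.out : G) ∈ W := by
        have heq : ((c.out : G))⁻¹ * (c'.out : G)
            = (v⁻¹ * (u⁻¹ * u') * v) * (v⁻¹ * v') := by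
          rw [← huv, ← huv']; group
        rw [heq]
        refine mul_mem (le_sup_left (α := Subgroup G) ?_)
          (le_sup_right (α := Subgroup G) ⟨h2V, h2⟩)
        have : v⁻¹ * (u⁻¹ * u') * (v⁻¹)⁻¹ ∈ U ⊓ N :=
          (Subgroup.normal_inf_normal U N).conj_mem _ ⟨h1U, h1⟩ v⁻¹
        simpa using this
      calc c = QuotientGroup.mk c.out := (QuotientGroup.out_eq' c).symm
        _ = QuotientGroup.mk c'.out := by
            rw [QuotientGroup.eq]
            simpa [Subgroup.mem_subgroupOf] using hkey
        _ = c' := QuotientGroup.out_eq' c'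
    exact Finite.of_injective f hf
  have hrel : W.relIndex N ≠ 0 := by
    haveI := hfin
    exact Subgroup.index_ne_zero_of_finite (H := W.subgroupOf N)
  refine ⟨?_⟩
  rw [← Subgroup.relIndex_mul_index hWN]
  exact mul_ne_zero hrel Subgroup.FiniteIndex.index_ne_zero

/-- If `H` is a virtually-full, virtually-coabelian subgroup of `D = Γ₁ × … × Γₙ`, there is a
finite-index subgroup `D' ≤ D` such that `H' = H ∩ D'` is full and coabelian in
`D' = (Γ₁ ∩ D') × … × (Γₙ ∩ D')`. -/
theorem exists_finiteIndex_full_coabelian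
    (n : ℕ) (Γ : Fin n → Type) [∀ i, Group (Γ i)]
    (H : Subgroup (∀ i, Γ i))
    (hfull : ∀ i, ((MonoidHom.mulSingle Γ i).range ⊔ H).FiniteIndex)
    (hcoab : ∃ D₀ : Subgroup (∀ i, Γ i), D₀.FiniteIndex ∧ ⁅D₀, D₀⁆ ≤ H) :
    ∃ D' : Subgroup (∀ i, Γ i), D'.FiniteIndex ∧
      ⁅D', D'⁆ ≤ H ⊓ D' ∧
      ∀ i, (((MonoidHom.mulSingle Γ i).range ⊓ D' : Subgroup (∀ i, Γ i)) : Set (∀ i, Γ i)) *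
          ((H ⊓ D' : Subgroup (∀ i, Γ i)) : Set (∀ i, Γ i)) = (D' : Set (∀ i, Γ i)) := by
  classical
  obtain ⟨D₀, hD₀fi, hD₀comm⟩ := hcoab
  set U : Fin n → Subgroup (∀ i, Γ i) := fun i => (MonoidHom.mulSingle Γ i).range with hU
  haveI hUnorm : ∀ i, (U i).Normal := fun i => mulSingle_range_normal Γ i
  haveI := hD₀fi
  haveI : ∀ i, (U i ⊔ H).FiniteIndex := hfull
  set K : Subgroup (∀ i, Γ i) := D₀ ⊓ ⨅ i, (U i ⊔ H) with hK
  haveI : (⨅ i, (U i ⊔ H)).FiniteIndex := Subgroup.finiteIndex_iInf hfull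
  haveI hKfi : K.FiniteIndex := by rw [hK]; infer_instance
  set N : Subgroup (∀ i, Γ i) := K.normalCore with hN
  haveI hNnorm : N.Normal := Subgroup.normalCore_normal K
  haveI hNfi : N.FiniteIndex := Subgroup.finiteIndex_normalCore K
  have hNK : N ≤ K := Subgroup.normalCore_le K
  have hNUH : ∀ i, N ≤ U i ⊔ H := fun i =>
    hNK.trans (inf_le_right.trans (iInf_le _ i))
  set W : Fin n → Subgroup (∀ i, Γ i) := fun i => (U i ⊓ N) ⊔ (H ⊓ N) with hWdef
  haveI hWfi : ∀ i, (W i).FiniteIndex := fun i => aux_finiteIndex (U i) H N (hNUH i)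
  set D' : Subgroup (∀ i, Γ i) := N ⊓ ⨅ i, W i with hD'
  haveI : (⨅ i, W i).FiniteIndex := Subgroup.finiteIndex_iInf hWfi
  haveI hD'fi : D'.FiniteIndex := by rw [hD']; infer_instance
  have hD'N : D' ≤ N := inf_le_left
  have hD'D₀ : D' ≤ D₀ := hD'N.trans (hNK.trans inf_le_left)
  refine ⟨D', hD'fi, ?_, ?_⟩
  · refine le_inf ((Subgroup.commutator_mono hD'D₀ hD'D₀).trans hD₀comm) ?_
    rw [Subgroup.commutator_le]
    intro g₁ h₁ g₂ h₂
    exact mul_mem (mul_mem (mul_mem h₁ h₂) (inv_mem h₁)) (inv_mem h₂)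
  · intro i
    apply Set.Subset.antisymm
    · rintro x ⟨g, hg, h, hh, rfl⟩
      exact mul_mem hg.2 hh.2
    · intro d hd
      have hdW : d ∈ W i := by
        have : d ∈ ⨅ j, W j := hd.2
        exact (Subgroup.mem_iInf).mp this i
      have : d ∈ ((U i ⊓ N : Subgroup (∀ i, Γ i)) : Set (∀ i, Γ i)) *
          ((H ⊓ N : Subgroup (∀ i, Γ i)) : Set (∀ i, Γ i)) := by
        haveI : (U i ⊓ N).Normal := Subgroup.normal_inf_normal (U i) N
        rw [← Subgroup.normal_mul]
        exact hdW
      obtain ⟨g, hg, h, hh, hgh⟩ := this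
      have hh' : h ∈ H ⊓ N := hh
      have hg' : g ∈ U i ⊓ N := hg
      have hhD' : h ∈ D' := by
        refine ⟨hh'.2, ?_⟩
        show h ∈ ⨅ j, W j
        rw [Subgroup.mem_iInf]
        intro j
        exact le_sup_right (α := Subgroup (∀ i, Γ i)) hh'
      have hgD' : g ∈ D' := by
        have : g = d * h⁻¹ := by rw [← hgh]; group
        rw [this]
        exact mul_mem hd (inv_mem hhD')
      exact ⟨g, ⟨hg'.1, hgD'⟩, h, ⟨hh'.1, hhD'⟩, hgh⟩
end

section
/- Let Γ_1, …, Γ_n be groups with n ≥ 3 and let H be a subgroup of D = Γ_1 × … × Γ_n such that Γ_i·H has finite index in D for each i. Then H is virtually-coabelian in D: there exists a finite-index subgroup D' ≤ D with [D', D'] ≤ H. -/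
open Subgroup
open scoped commutatorElement

section Aux
variable {η : Type*} [DecidableEq η] {Γ : η → Type*} [∀ i, Group (Γ i)]

/-- The canonical copy of a factor in a direct product is normal. -/
lemma mulSingle_range_normal_s14 (j : η) : ((MonoidHom.mulSingle Γ j).range).Normal := by
  constructor
  intro x hx g
  obtain ⟨a, rfl⟩ := hx
  refine ⟨g j * a * (g j)⁻¹, ?_⟩
  ext m
  by_cases h : m = j
  · subst h; simp
  · simp [Pi.mulSingle_eq_of_ne h, MonoidHom.mulSingle_apply]

/-- Key lemma: if the canonical copies of `u` and `v` in coordinate `i` lie in `Γⱼ·H` and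
`Γₖ·H` respectively, with `i, j, k` pairwise distinct, then the copy of `⁅u,v⁆` lies in `H`. -/
lemma mulSingle_commutator_mem
    {H : Subgroup (∀ i, Γ i)} {i j k : η} (hij : j ≠ i) (hik : k ≠ i) (hjk : j ≠ k)
    {u v : Γ i}
    (hu : Pi.mulSingle i u ∈ (MonoidHom.mulSingle Γ j).range ⊔ H)
    (hv : Pi.mulSingle i v ∈ (MonoidHom.mulSingle Γ k).range ⊔ H) :
    Pi.mulSingle i ⁅u, v⁆ ∈ H := by
  haveI := mulSingle_range_normal_s14 (Γ := Γ) j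
  haveI := mulSingle_range_normal_s14 (Γ := Γ) k
  rw [← SetLike.mem_coe, Subgroup.normal_mul] at hu hv
  obtain ⟨a, ⟨c, rfl⟩, x, hx, hux⟩ := hu
  obtain ⟨b, ⟨d, rfl⟩, y, hy, hvy⟩ := hv
  have hxe : x = (MonoidHom.mulSingle Γ j c)⁻¹ * Pi.mulSingle i u := by
    rw [← hux]; group
  have hye : y = (MonoidHom.mulSingle Γ k d)⁻¹ * Pi.mulSingle i v := by
    rw [← hvy]; group
  have key : ⁅x, y⁆ = Pi.mulSingle i ⁅u, v⁆ := by
    subst hxe hye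
    ext m
    simp only [commutatorElement_def, Pi.mul_apply, Pi.inv_apply, MonoidHom.mulSingle_apply]
    by_cases hmi : m = i
    · subst hmi
      simp [Pi.mulSingle_eq_of_ne (Ne.symm hij), Pi.mulSingle_eq_of_ne (Ne.symm hik),
        commutatorElement_def]
    · by_cases hmj : m = j
      · subst hmj
        simp [Pi.mulSingle_eq_of_ne hij, Pi.mulSingle_eq_of_ne hjk]
      · by_cases hmk : m = k
        · subst hmk
          simp [Pi.mulSingle_eq_of_ne hik, Pi.mulSingle_eq_of_ne (Ne.symm hjk)]
        · simp [Pi.mulSingle_eq_of_ne hmi, Pi.mulSingle_eq_of_ne hmj,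
            Pi.mulSingle_eq_of_ne hmk]
  rw [← key, commutatorElement_def]
  exact mul_mem (mul_mem (mul_mem hx hy) (inv_mem hx)) (inv_mem hy)

end Aux

/-- A depth-1 subgroup of a direct product of `n ≥ 3` groups is virtually-coabelian: if
`Γᵢ·H` has finite index in `D = Γ₁ × … × Γₙ` for every `i`, then there is a finite-index
subgroup `D' ≤ D` with `[D', D'] ≤ H`. -/
theorem depth_one_virtually_coabelian
    (n : ℕ) (hn : 3 ≤ n) (Γ : Fin n → Type) [∀ i, Group (Γ i)]
    (H : Subgroup (∀ i, Γ i))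
    (hfull : ∀ i, ((MonoidHom.mulSingle Γ i).range ⊔ H).FiniteIndex) :
    ∃ D' : Subgroup (∀ i, Γ i), D'.FiniteIndex ∧ ⁅D', D'⁆ ≤ H := by
  classical
  set N : Subgroup (∀ i, Γ i) := ⨅ m, ((MonoidHom.mulSingle Γ m).range ⊔ H) with hNdef
  have hNfi : N.FiniteIndex := Subgroup.finiteIndex_iInf hfull
  set π : Fin n → ((∀ i, Γ i) →* (∀ i, Γ i)) :=
    fun i => (MonoidHom.mulSingle Γ i).comp (Pi.evalMonoidHom Γ i) with hπdef
  refine ⟨⨅ i, N.comap (π i), Subgroup.finiteIndex_iInf fun i => ?_, ?_⟩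
  · constructor
    rw [Subgroup.index_comap]
    intro h0
    exact hNfi.index_ne_zero (Subgroup.index_eq_zero_of_relIndex_eq_zero h0)
  · rw [Subgroup.commutator_le]
    intro g hg h hh
    have hmem : ∀ x : ∀ i, Γ i, x ∈ ⨅ i, N.comap (π i) →
        ∀ i m, Pi.mulSingle i (x i) ∈ (MonoidHom.mulSingle Γ m).range ⊔ H := by
      intro x hx i m
      have h1 := Subgroup.mem_iInf.mp hx i
      rw [Subgroup.mem_comap] at h1
      exact Subgroup.mem_iInf.mp h1 m
    have hfac : ∀ i, Pi.mulSingle i (⁅g, h⁆ i) ∈ H := by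
      intro i
      obtain ⟨j, k, hij, hik, hjk⟩ : ∃ j k : Fin n, j ≠ i ∧ k ≠ i ∧ j ≠ k := by
        rcases eq_or_ne i ⟨0, by omega⟩ with h0 | h0
        · exact ⟨⟨1, by omega⟩, ⟨2, by omega⟩, by simp [h0, Fin.ext_iff],
            by simp [h0, Fin.ext_iff], by simp [Fin.ext_iff]⟩
        · rcases eq_or_ne i ⟨1, by omega⟩ with h1 | h1
          · exact ⟨⟨0, by omega⟩, ⟨2, by omega⟩, by simp [h1, Fin.ext_iff],
              by simp [h1, Fin.ext_iff], by simp [Fin.ext_iff]⟩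
          · exact ⟨⟨0, by omega⟩, ⟨1, by omega⟩, Ne.symm h0, Ne.symm h1,
              by simp [Fin.ext_iff]⟩
      have hci : (⁅g, h⁆ : ∀ i, Γ i) i = ⁅g i, h i⁆ := rfl
      rw [hci]
      exact mulSingle_commutator_mem hij hik hjk (hmem g hg i j) (hmem h hh i k)
    rw [← Finset.noncommProd_mulSingle (⁅g, h⁆ : ∀ i, Γ i)]
    exact Subgroup.noncommProd_mem H _ fun i _ => hfac i
end

section
/- Define S_1 = {e_i^{(1)}(e_i^{(k)})^{-1} : 1 ≤ i ≤ r, 2 ≤ k ≤ n}, S_2 = {e_i^{(k)} : r+1 ≤ i ≤ m, 1 ≤ k ≤ n}, and S_3 = {[e_i^{(1)}, e_j^{(1)}] : 1 ≤ i < j ≤ r}, regarded as elements of F^{(1)}_m × … × F^{(n)}_m. If n ≥ 2 then K^n_m(r) is generated by S_1 ∪ S_2 ∪ S_3. If n ≥ 3 then K^n_m(r) is generated by S_1 ∪ S_2. -/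
/-- The homomorphism `F_m → ℤ^r` sending the `j`-th basis element to `t_j` for `j < r`
and to `0` otherwise. -/
def thetaComp (m r : ℕ) : FreeGroup (Fin m) →* Multiplicative (Fin r → ℤ) :=
  FreeGroup.lift fun j =>
    Multiplicative.ofAdd (if h : (j : ℕ) < r then Pi.single (⟨j, h⟩ : Fin r) (1 : ℤ) else 0)

/-- The homomorphism `θ : F_m^{(1)} × … × F_m^{(n)} → ℤ^r` with `θ(e_j^{(i)}) = t_j` for
`j < r` and `θ(e_j^{(i)}) = 0` otherwise.  Its kernel is `K^n_m(r)`. -/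
def theta (n m r : ℕ) : (Fin n → FreeGroup (Fin m)) →* Multiplicative (Fin r → ℤ) :=
  MonoidHom.noncommPiCoprod (fun _ : Fin n => thetaComp m r)
    (fun {_ _} _ _ _ => Commute.all _ _)

/-- The generator `e_j^{(i)}` of the direct product of free groups (indices 0-based). -/
def genE (n m : ℕ) (i : Fin n) (j : Fin m) : Fin n → FreeGroup (Fin m) :=
  Pi.mulSingle i (FreeGroup.of j)

/-- `S₁ = {e_j^{(1)} (e_j^{(k)})⁻¹ : j ≤ r, 2 ≤ k ≤ n}` (0-based indexing). -/
def S1 (n m r : ℕ) (hn : 0 < n) : Set (Fin n → FreeGroup (Fin m)) :=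
  {x | ∃ (j : Fin m) (k : Fin n), (j : ℕ) < r ∧ 1 ≤ (k : ℕ) ∧
    x = genE n m ⟨0, hn⟩ j * (genE n m k j)⁻¹}

/-- `S₂ = {e_j^{(k)} : r+1 ≤ j ≤ m, 1 ≤ k ≤ n}` (0-based indexing). -/
def S2 (n m r : ℕ) : Set (Fin n → FreeGroup (Fin m)) :=
  {x | ∃ (j : Fin m) (k : Fin n), r ≤ (j : ℕ) ∧ x = genE n m k j}

open scoped commutatorElement

/-- `S₃ = {[e_j^{(1)}, e_{j'}^{(1)}] : 1 ≤ j < j' ≤ r}` (0-based indexing). -/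
def S3 (n m r : ℕ) (hn : 0 < n) : Set (Fin n → FreeGroup (Fin m)) :=
  {x | ∃ j j' : Fin m, (j : ℕ) < (j' : ℕ) ∧ (j' : ℕ) < r ∧
    x = ⁅genE n m ⟨0, hn⟩ j, genE n m ⟨0, hn⟩ j'⁆}

namespace Knmr

variable {n m r : ℕ}

/-- The subgroup generated by `S1 ∪ S2 ∪ S3`. -/
def HH (n m r : ℕ) (h0 : 0 < n) : Subgroup (Fin n → FreeGroup (Fin m)) :=
  Subgroup.closure (S1 n m r h0 ∪ S2 n m r ∪ S3 n m r h0)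

lemma genE_apply (i : Fin n) (j : Fin m) (k : Fin n) :
    genE n m i j k = if k = i then FreeGroup.of j else 1 :=
  Pi.mulSingle_apply i (FreeGroup.of j) k

lemma commute_single {i : Fin n} (x : FreeGroup (Fin m)) {s : Fin n → FreeGroup (Fin m)}
    (h : s i = 1) : Commute (Pi.mulSingle i x) s := by
  show Pi.mulSingle i x * s = s * Pi.mulSingle i x
  funext k
  by_cases hk : k = i
  · subst hk; simp [h]
  · simp [Pi.mulSingle_apply, hk]

lemma conj_eq {i : Fin n} {A : Fin n → FreeGroup (Fin m)} (s : Fin n → FreeGroup (Fin m))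
    (h : ∀ k, k ≠ i → A k = 1 ∨ s k = 1) :
    A * s * A⁻¹ = Pi.mulSingle i (A i) * s * (Pi.mulSingle i (A i))⁻¹ := by
  funext k
  by_cases hk : k = i
  · subst hk; simp [Pi.mulSingle_apply]
  · rcases h k hk with h1 | h1 <;> simp [Pi.mulSingle_apply, hk, h1]

end Knmr

namespace Knmr

variable {n m r : ℕ}

lemma w1 (h0 : 0 < n) (i k : Fin n) (j : Fin m) (hj : (j : ℕ) < r) :
    genE n m i j * (genE n m k j)⁻¹ ∈ HH n m r h0 := by
  have h1 : ∀ k : Fin n, genE n m ⟨0, h0⟩ j * (genE n m k j)⁻¹ ∈ HH n m r h0 := by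
    intro k
    by_cases hk : (k : ℕ) = 0
    · have : k = ⟨0, h0⟩ := Fin.ext hk
      subst this; simpa using one_mem _
    · exact Subgroup.subset_closure (Or.inl (Or.inl ⟨j, k, hj, Nat.one_le_iff_ne_zero.mpr hk, rfl⟩))
  have key : genE n m i j * (genE n m k j)⁻¹ =
      (genE n m ⟨0, h0⟩ j * (genE n m i j)⁻¹)⁻¹ * (genE n m ⟨0, h0⟩ j * (genE n m k j)⁻¹) := by
    group
  rw [key]
  exact mul_mem (inv_mem (h1 i)) (h1 k)

lemma s2mem (h0 : 0 < n) (k : Fin n) (j : Fin m) (hj : r ≤ (j : ℕ)) :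
    genE n m k j ∈ HH n m r h0 :=
  Subgroup.subset_closure (Or.inl (Or.inr ⟨j, k, hj, rfl⟩))

lemma hcomm0 (h0 : 0 < n) (j j' : Fin m) (hj : (j : ℕ) < r) (hj' : (j' : ℕ) < r) :
    ⁅genE n m ⟨0, h0⟩ j, genE n m ⟨0, h0⟩ j'⁆ ∈ HH n m r h0 := by
  rcases lt_trichotomy (j : ℕ) (j' : ℕ) with h | h | h
  · exact Subgroup.subset_closure (Or.inr ⟨j, j', h, hj', rfl⟩)
  · have : j = j' := Fin.ext h
    subst this
    simpa [commutatorElement_eq_one_iff_commute.mpr (Commute.refl _)] using one_mem (HH n m r h0)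
  · rw [← commutatorElement_inv]
    exact inv_mem (Subgroup.subset_closure (Or.inr ⟨j', j, h, hj, rfl⟩))

end Knmr

namespace Knmr

variable {n m r : ℕ}

/-- Conjugation by `e_p^{(i)}` (p < r) of an element of `H` vanishing at some
coordinate `c ≠ i` stays in `H`. -/
lemma conj_vanish (h0 : 0 < n) {i c : Fin n} (hci : c ≠ i) {p : Fin m} (hp : (p : ℕ) < r)
    {s : Fin n → FreeGroup (Fin m)} (hs : s ∈ HH n m r h0) (hsc : s c = 1) :
    genE n m i p * s * (genE n m i p)⁻¹ ∈ HH n m r h0 ∧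
      (genE n m i p)⁻¹ * s * genE n m i p ∈ HH n m r h0 := by
  set B := genE n m i p * (genE n m c p)⁻¹ with hBdef
  have hB : B ∈ HH n m r h0 := w1 h0 i c p hp
  have hBi : B i = FreeGroup.of p := by
    simp [hBdef, genE_apply, hci, genE]
  have hBinvi : B⁻¹ i = (FreeGroup.of p)⁻¹ := by
    simp [hBi]
  have hkey : ∀ k, k ≠ i → B k = 1 ∨ s k = 1 := by
    intro k hk
    by_cases hkc : k = c
    · exact Or.inr (hkc ▸ hsc)
    · left
      simp [hBdef, genE_apply, hk, hkc, genE]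
  constructor
  · have := conj_eq (A := B) s hkey
    rw [hBi] at this
    have h2 : genE n m i p * s * (genE n m i p)⁻¹ = B * s * B⁻¹ := by
      rw [this]; rfl
    rw [h2]
    exact mul_mem (mul_mem hB hs) (inv_mem hB)
  · have hkey' : ∀ k, k ≠ i → B⁻¹ k = 1 ∨ s k = 1 := by
      intro k hk
      rcases hkey k hk with h1 | h1
      · left; simp [h1]
      · exact Or.inr h1
    have := conj_eq (A := B⁻¹) s hkey'
    rw [hBinvi] at this
    have h2 : (genE n m i p)⁻¹ * s * genE n m i p = B⁻¹ * s * B⁻¹⁻¹ := by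
      rw [this]
      have : Pi.mulSingle i (FreeGroup.of p)⁻¹ = (genE n m i p)⁻¹ := by
        rw [genE, ← Pi.mulSingle_inv]
      rw [this, inv_inv]
    rw [h2]
    exact mul_mem (mul_mem (inv_mem hB) hs) (inv_mem (inv_mem hB))

end Knmr

namespace Knmr

variable {n m r : ℕ}

lemma cinv (h0 : 0 < n) (hn : 2 ≤ n) (j j' : Fin m) (hj : (j : ℕ) < r) (hj' : (j' : ℕ) < r) :
    ⁅(genE n m ⟨0, h0⟩ j)⁻¹, (genE n m ⟨0, h0⟩ j')⁻¹⁆ ∈ HH n m r h0 := by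
  have h1 : (1 : ℕ) < n := by omega
  set e1 : Fin n := ⟨1, h1⟩ with he1
  set A := (genE n m ⟨0, h0⟩ j * (genE n m e1 j)⁻¹) *
      (genE n m ⟨0, h0⟩ j' * (genE n m e1 j')⁻¹) with hA
  have hAmem : A ∈ HH n m r h0 := mul_mem (w1 h0 _ _ _ hj) (w1 h0 _ _ _ hj')
  have key : ⁅(genE n m ⟨0, h0⟩ j)⁻¹, (genE n m ⟨0, h0⟩ j')⁻¹⁆ =
      A⁻¹ * ⁅genE n m ⟨0, h0⟩ j, genE n m ⟨0, h0⟩ j'⁆ * A := by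
    funext k
    by_cases hk0 : k = ⟨0, h0⟩
    · subst hk0
      simp [commutatorElement_def, hA, genE_apply, he1, Fin.ext_iff]
      group
    · by_cases hk1 : k = e1
      · subst hk1
        simp [commutatorElement_def, hA, genE_apply, he1, Fin.ext_iff]
      · simp [commutatorElement_def, hA, genE_apply, hk0, hk1]
  rw [key]
  exact mul_mem (mul_mem (inv_mem hAmem) (hcomm0 h0 j j' hj hj')) hAmem

lemma hcommi (h0 : 0 < n) (hn : 2 ≤ n) (i : Fin n) (j j' : Fin m) (hj : (j : ℕ) < r)
    (hj' : (j' : ℕ) < r) :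
    ⁅genE n m i j, genE n m i j'⁆ ∈ HH n m r h0 := by
  by_cases hi : i = ⟨0, h0⟩
  · subst hi; exact hcomm0 h0 j j' hj hj'
  · set a := genE n m i j * (genE n m ⟨0, h0⟩ j)⁻¹ with ha
    set b := genE n m i j' * (genE n m ⟨0, h0⟩ j')⁻¹ with hb
    have hamem : a ∈ HH n m r h0 := w1 h0 _ _ _ hj
    have hbmem : b ∈ HH n m r h0 := w1 h0 _ _ _ hj'
    have key : ⁅genE n m i j, genE n m i j'⁆ =
        ⁅a, b⁆ * ⁅(genE n m ⟨0, h0⟩ j)⁻¹, (genE n m ⟨0, h0⟩ j')⁻¹⁆⁻¹ := by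
      funext k
      by_cases hk0 : k = ⟨0, h0⟩
      · subst hk0
        have hi' : ¬(0 : ℕ) = (i : ℕ) := by
          intro h; exact hi (Fin.ext h.symm)
        simp [commutatorElement_def, ha, hb, genE_apply, Fin.ext_iff, hi']
      · by_cases hki : k = i
        · subst hki
          simp [commutatorElement_def, ha, hb, genE_apply, hk0]
        · simp [commutatorElement_def, ha, hb, genE_apply, hk0, hki]
    rw [key]
    refine mul_mem ?_ (inv_mem (cinv h0 hn j j' hj hj'))
    rw [commutatorElement_def]
    exact mul_mem (mul_mem (mul_mem hamem hbmem) (inv_mem hamem)) (inv_mem hbmem)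

end Knmr

namespace Knmr

variable {n m r : ℕ}

lemma conj_comm_eq {G : Type*} [Group G] {x s : G} (hc : Commute x s) :
    x * s * x⁻¹ = s ∧ x⁻¹ * s * x = s := by
  constructor
  · rw [hc.eq, mul_inv_cancel_right]
  · rw [hc.inv_left.eq, inv_mul_cancel_right]

/-- Conjugation by generators `e_p^{(i)}` with `p < r` maps `S1 ∪ S2 ∪ S3` into `H`. -/
lemma conj_S (h0 : 0 < n) (hn : 2 ≤ n) (i : Fin n) (p : Fin m) (hp : (p : ℕ) < r)
    {s : Fin n → FreeGroup (Fin m)} (hs : s ∈ S1 n m r h0 ∪ S2 n m r ∪ S3 n m r h0) :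
    genE n m i p * s * (genE n m i p)⁻¹ ∈ HH n m r h0 ∧
      (genE n m i p)⁻¹ * s * genE n m i p ∈ HH n m r h0 := by
  have h1 : (1 : ℕ) < n := by omega
  have hsH : s ∈ HH n m r h0 := Subgroup.subset_closure hs
  rcases hs with (hs1 | hs2) | hs3
  · -- S1
    obtain ⟨j, k, hj, hk1, rfl⟩ := hs1
    by_cases hi0 : i = ⟨0, h0⟩
    · subst hi0
      have hik : (⟨0, h0⟩ : Fin n) ≠ k := by
        intro h; rw [← h] at hk1; simp at hk1
      constructor
      · have claim1 : genE n m ⟨0, h0⟩ p * (genE n m ⟨0, h0⟩ j * (genE n m k j)⁻¹) *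
            (genE n m ⟨0, h0⟩ p)⁻¹ =
            ⁅genE n m ⟨0, h0⟩ p, genE n m ⟨0, h0⟩ j⁆ *
              (genE n m ⟨0, h0⟩ j * (genE n m k j)⁻¹) := by
          funext w
          by_cases hw0 : w = ⟨0, h0⟩
          · subst hw0
            simp [commutatorElement_def, genE_apply, hik]
          · by_cases hwk : w = k
            · subst hwk
              simp [commutatorElement_def, genE_apply, Ne.symm hik, hw0]
            · simp [commutatorElement_def, genE_apply, hw0, hwk]
        rw [claim1]
        exact mul_mem (hcomm0 h0 p j hp hj) hsH
      · have claim2 : (genE n m ⟨0, h0⟩ p)⁻¹ * (genE n m ⟨0, h0⟩ j * (genE n m k j)⁻¹) *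
            genE n m ⟨0, h0⟩ p =
            ((genE n m ⟨0, h0⟩ p)⁻¹ * ⁅genE n m ⟨0, h0⟩ j, genE n m ⟨0, h0⟩ p⁆ *
              genE n m ⟨0, h0⟩ p) * (genE n m ⟨0, h0⟩ j * (genE n m k j)⁻¹) := by
          funext w
          by_cases hw0 : w = ⟨0, h0⟩
          · subst hw0
            simp [commutatorElement_def, genE_apply, hik]
            group
          · by_cases hwk : w = k
            · subst hwk
              simp [commutatorElement_def, genE_apply, Ne.symm hik, hw0]
            · simp [commutatorElement_def, genE_apply, hw0, hwk]
        rw [claim2]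
        refine mul_mem ?_ hsH
        have hc1 : (⟨1, h1⟩ : Fin n) ≠ ⟨0, h0⟩ := by simp [Fin.ext_iff]
        have hX : ⁅genE n m ⟨0, h0⟩ j, genE n m ⟨0, h0⟩ p⁆ ∈ HH n m r h0 :=
          hcomm0 h0 j p hj hp
        have hXc : ⁅genE n m ⟨0, h0⟩ j, genE n m ⟨0, h0⟩ p⁆ (⟨1, h1⟩ : Fin n) = 1 := by
          simp [commutatorElement_def, genE_apply, hc1]
        exact (conj_vanish h0 hc1 hp hX hXc).2
    · by_cases hik : i = k
      · subst hik
        have hi0' : i ≠ ⟨0, h0⟩ := hi0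
        constructor
        · have claim1 : genE n m i p * (genE n m ⟨0, h0⟩ j * (genE n m i j)⁻¹) *
              (genE n m i p)⁻¹ =
              (genE n m ⟨0, h0⟩ j * (genE n m i j)⁻¹) * ⁅genE n m i j, genE n m i p⁆ := by
            funext w
            by_cases hwi : w = i
            · subst hwi
              simp [commutatorElement_def, genE_apply, hi0']
              group
            · by_cases hw0 : w = ⟨0, h0⟩
              · subst hw0
                simp [commutatorElement_def, genE_apply, Ne.symm hi0', hwi]
              · simp [commutatorElement_def, genE_apply, hw0, hwi]
          rw [claim1]
          exact mul_mem hsH (hcommi h0 hn i j p hj hp)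
        · have claim2 : (genE n m i p)⁻¹ * (genE n m ⟨0, h0⟩ j * (genE n m i j)⁻¹) *
              genE n m i p =
              (genE n m ⟨0, h0⟩ j * (genE n m i j)⁻¹) *
                ((genE n m i p)⁻¹ * ⁅genE n m i p, genE n m i j⁆ * genE n m i p) := by
            funext w
            by_cases hwi : w = i
            · subst hwi
              simp [commutatorElement_def, genE_apply, hi0']
              group
            · by_cases hw0 : w = ⟨0, h0⟩
              · subst hw0
                simp [commutatorElement_def, genE_apply, Ne.symm hi0', hwi]
              · simp [commutatorElement_def, genE_apply, hw0, hwi]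
          rw [claim2]
          refine mul_mem hsH ?_
          have hc1 : (⟨0, h0⟩ : Fin n) ≠ i := Ne.symm hi0'
          have hX : ⁅genE n m i p, genE n m i j⁆ ∈ HH n m r h0 := hcommi h0 hn i p j hp hj
          have hXc : ⁅genE n m i p, genE n m i j⁆ (⟨0, h0⟩ : Fin n) = 1 := by
            simp [commutatorElement_def, genE_apply, hc1]
          exact (conj_vanish h0 hc1 hp hX hXc).2
      · have hsi : (genE n m ⟨0, h0⟩ j * (genE n m k j)⁻¹) i = 1 := by
          simp [genE_apply, hi0, hik]
        have hc := commute_single (i := i) (FreeGroup.of p) hsi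
        refine ⟨?_, ?_⟩
        · rw [genE, (conj_comm_eq hc).1]; exact hsH
        · rw [genE, (conj_comm_eq hc).2]; exact hsH
  · -- S2
    obtain ⟨j, k, hj, rfl⟩ := hs2
    by_cases hik : i = k
    · subst hik
      set c : Fin n := if (i : ℕ) = 0 then ⟨1, h1⟩ else ⟨0, h0⟩ with hc
      have hci : c ≠ i := by
        rcases eq_or_ne (i : ℕ) 0 with h | h <;>
          simp [hc, h, Fin.ext_iff] <;> omega
      have hsc : genE n m i j c = 1 := by simp [genE_apply, hci]
      exact conj_vanish h0 hci hp hsH hsc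
    · have hsi : genE n m k j i = 1 := by simp [genE_apply, hik]
      have hc := commute_single (i := i) (FreeGroup.of p) hsi
      refine ⟨?_, ?_⟩
      · rw [genE, (conj_comm_eq hc).1]; exact hsH
      · rw [genE, (conj_comm_eq hc).2]; exact hsH
  · -- S3
    obtain ⟨j, j', hjj, hj', rfl⟩ := hs3
    by_cases hi0 : i = ⟨0, h0⟩
    · subst hi0
      have hc1 : (⟨1, h1⟩ : Fin n) ≠ ⟨0, h0⟩ := by simp [Fin.ext_iff]
      have hsc : ⁅genE n m ⟨0, h0⟩ j, genE n m ⟨0, h0⟩ j'⁆ (⟨1, h1⟩ : Fin n) = 1 := by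
        simp [commutatorElement_def, genE_apply, hc1]
      exact conj_vanish h0 hc1 hp hsH hsc
    · have hsi : ⁅genE n m ⟨0, h0⟩ j, genE n m ⟨0, h0⟩ j'⁆ i = 1 := by
        simp [commutatorElement_def, genE_apply, hi0]
      have hc := commute_single (i := i) (FreeGroup.of p) hsi
      refine ⟨?_, ?_⟩
      · rw [genE, (conj_comm_eq hc).1]; exact hsH
      · rw [genE, (conj_comm_eq hc).2]; exact hsH

end Knmr

namespace Knmr

variable {n m r : ℕ}

lemma conj_mem_of_conj_S (h0 : 0 < n) (x : Fin n → FreeGroup (Fin m))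
    (hx : ∀ s ∈ S1 n m r h0 ∪ S2 n m r ∪ S3 n m r h0, x * s * x⁻¹ ∈ HH n m r h0) :
    ∀ h ∈ HH n m r h0, x * h * x⁻¹ ∈ HH n m r h0 := by
  intro h hh
  have hle : HH n m r h0 ≤ (HH n m r h0).comap (MulAut.conj x).toMonoidHom := by
    rw [HH, Subgroup.closure_le]
    intro s hs
    simpa [Subgroup.mem_comap, MulAut.conj_apply, HH] using hx s hs
  simpa [Subgroup.mem_comap, MulAut.conj_apply] using hle hh

lemma genE_mem_normalizer (h0 : 0 < n) (hn : 2 ≤ n) (i : Fin n) (j : Fin m) :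
    genE n m i j ∈ Subgroup.normalizer (HH n m r h0 : Set _) := by
  by_cases hj : (j : ℕ) < r
  · have fwd : ∀ h ∈ HH n m r h0, genE n m i j * h * (genE n m i j)⁻¹ ∈ HH n m r h0 :=
      conj_mem_of_conj_S h0 _ (fun s hs => (conj_S h0 hn i j hj hs).1)
    have bwd : ∀ h ∈ HH n m r h0, (genE n m i j)⁻¹ * h * genE n m i j ∈ HH n m r h0 := by
      have := conj_mem_of_conj_S h0 (genE n m i j)⁻¹
        (fun s hs => by simpa [inv_inv] using (conj_S h0 hn i j hj hs).2)
      intro h hh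
      simpa [inv_inv] using this h hh
    rw [Subgroup.mem_normalizer_iff]
    intro h
    constructor
    · exact fun hh => fwd h hh
    · intro hh
      have := bwd _ hh
      simpa [mul_assoc, inv_mul_cancel_left, mul_inv_cancel_right] using this
  · exact Subgroup.le_normalizer (s2mem h0 i j (le_of_not_gt hj))

lemma normalizer_top (h0 : 0 < n) (hn : 2 ≤ n) :
    Subgroup.normalizer (HH n m r h0 : Set (Fin n → FreeGroup (Fin m))) = ⊤ := by
  rw [eq_top_iff]
  intro g _
  have hsingle : ∀ (i : Fin n) (y : FreeGroup (Fin m)),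
      Pi.mulSingle i y ∈ Subgroup.normalizer (HH n m r h0 : Set (Fin n → FreeGroup (Fin m))) := by
    intro i
    have hle : Subgroup.closure (Set.range (FreeGroup.of (α := Fin m))) ≤
        (Subgroup.normalizer (HH n m r h0 : Set (Fin n → FreeGroup (Fin m)))).comap (MonoidHom.mulSingle _ i) := by
      rw [Subgroup.closure_le]
      rintro _ ⟨j, rfl⟩
      simpa [Subgroup.mem_comap, genE] using genE_mem_normalizer h0 hn i j
    intro y
    have hy : y ∈ Subgroup.closure (Set.range (FreeGroup.of (α := Fin m))) := by
      rw [FreeGroup.closure_range_of]; trivial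
    simpa [Subgroup.mem_comap] using hle hy
  rw [← Finset.noncommProd_mulSingle g]
  exact Subgroup.noncommProd_mem _ _ (fun i _ => hsingle i (g i))

lemma hh_normal (h0 : 0 < n) (hn : 2 ≤ n) : (HH n m r h0).Normal :=
  Subgroup.normalizer_eq_top_iff.mp (normalizer_top h0 hn)

end Knmr

namespace Knmr

variable {n m r : ℕ}

lemma theta_genE (i : Fin n) (j : Fin m) :
    theta n m r (genE n m i j) =
      Multiplicative.ofAdd
        (if h : (j : ℕ) < r then Pi.single (⟨j, h⟩ : Fin r) (1 : ℤ) else 0) := by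
  rw [genE, theta]
  erw [MonoidHom.noncommPiCoprod_mulSingle]
  rw [thetaComp, FreeGroup.lift_apply_of]

lemma hh_le_ker (h0 : 0 < n) : HH n m r h0 ≤ (theta n m r).ker := by
  rw [HH, Subgroup.closure_le]
  rintro s ((⟨j, k, hj, hk, rfl⟩ | ⟨j, k, hj, rfl⟩) | ⟨j, j', hjj, hj', rfl⟩)
  · simp [MonoidHom.mem_ker, theta_genE]
  · simp [MonoidHom.mem_ker, theta_genE, Nat.not_lt.mpr hj]
  · show _ ∈ (theta n m r).ker
    rw [MonoidHom.mem_ker, map_commutatorElement]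
    exact commutatorElement_eq_one_iff_commute.mpr (Commute.all _ _)

lemma ker_le_hh (h0 : 0 < n) (hn : 2 ≤ n) (hrm : r ≤ m) :
    (theta n m r).ker ≤ HH n m r h0 := by
  haveI := hh_normal (m := m) (r := r) h0 hn
  set q := QuotientGroup.mk' (HH n m r h0) with hq
  have hq1 : ∀ (i : Fin n) (j : Fin m), (j : ℕ) < r →
      q (genE n m ⟨0, h0⟩ j) = q (genE n m i j) := by
    intro i j hj
    have h := (QuotientGroup.eq_one_iff _).mpr (w1 h0 i ⟨0, h0⟩ j hj)
    have h2 : q (genE n m i j * (genE n m ⟨0, h0⟩ j)⁻¹) = 1 := h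
    rw [map_mul, map_inv, mul_inv_eq_one] at h2
    exact h2.symm
  have hqc : ∀ J J' : Fin r,
      Commute (q (genE n m ⟨0, h0⟩ (Fin.castLE hrm J)))
        (q (genE n m ⟨0, h0⟩ (Fin.castLE hrm J'))) := by
    intro J J'
    have hmem := hcomm0 h0 (Fin.castLE hrm J) (Fin.castLE hrm J')
      (by rw [Fin.coe_castLE]; exact J.isLt) (by rw [Fin.coe_castLE]; exact J'.isLt)
    have : q ⁅genE n m ⟨0, h0⟩ (Fin.castLE hrm J), genE n m ⟨0, h0⟩ (Fin.castLE hrm J')⁆ = 1 :=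
      (QuotientGroup.eq_one_iff _).mpr hmem
    rw [map_commutatorElement] at this
    exact commutatorElement_eq_one_iff_commute.mp this
  set ρ := (MonoidHom.noncommPiCoprod
      (fun J : Fin r => zpowersHom _ (q (genE n m ⟨0, h0⟩ (Fin.castLE hrm J))))
      (fun J J' _ x y => by
        simpa [zpowersHom_apply] using (hqc J J').zpow_zpow x.toAdd y.toAdd)).comp
      (MulEquiv.piMultiplicative (fun _ : Fin r => ℤ)).toMonoidHom with hρ
  have main : ρ.comp (theta n m r) = q := by
    apply MonoidHom.pi_ext
    intro i x
    have hcomp : (ρ.comp (theta n m r)).comp (MonoidHom.mulSingle _ i)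
        = q.comp (MonoidHom.mulSingle _ i) := by
      apply FreeGroup.ext_hom
      intro j
      simp only [MonoidHom.comp_apply, MonoidHom.mulSingle_apply]
      rw [show Pi.mulSingle i (FreeGroup.of j) = genE n m i j from rfl, theta_genE]
      by_cases hj : (j : ℕ) < r
      · rw [dif_pos hj, hρ]
        have e1 : (MulEquiv.piMultiplicative (fun _ : Fin r => ℤ))
            (Multiplicative.ofAdd (Pi.single (⟨j, hj⟩ : Fin r) (1 : ℤ)))
            = Pi.mulSingle (⟨j, hj⟩ : Fin r) (Multiplicative.ofAdd (1 : ℤ)) := by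
          funext J
          by_cases hJ : J = ⟨j, hj⟩ <;>
            simp [MulEquiv.piMultiplicative, Pi.single_apply, Pi.mulSingle_apply, hJ]
        rw [MonoidHom.comp_apply, MulEquiv.coe_toMonoidHom, e1]
        erw [MonoidHom.noncommPiCoprod_mulSingle]
        rw [zpowersHom_apply]
        have hcast : Fin.castLE hrm (⟨j, hj⟩ : Fin r) = j := by
          apply Fin.ext; simp
        rw [hcast]
        simpa using hq1 i j hj
      · rw [dif_neg hj]
        simp only [ofAdd_zero, map_one]
        exact ((QuotientGroup.eq_one_iff _).mpr (s2mem h0 i j (le_of_not_gt hj))).symm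
    exact DFunLike.congr_fun hcomp x
  intro g hg
  have hg1 : q g = 1 := by
    rw [← main, MonoidHom.comp_apply, MonoidHom.mem_ker.mp hg, map_one]
  exact (QuotientGroup.eq_one_iff g).mp hg1

end Knmr

namespace Knmr

variable {n m r : ℕ}

lemma s3_sub (h0 : 0 < n) (hn3 : 3 ≤ n) :
    S3 n m r h0 ⊆ (Subgroup.closure (S1 n m r h0 ∪ S2 n m r) : Set _) := by
  rintro s ⟨j, j', hjj, hj', rfl⟩
  have h1 : (1 : ℕ) < n := by omega
  have h2 : (2 : ℕ) < n := by omega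
  have hj : (j : ℕ) < r := lt_trans hjj hj'
  set a := genE n m ⟨0, h0⟩ j * (genE n m ⟨1, h1⟩ j)⁻¹ with hadef
  set b := genE n m ⟨0, h0⟩ j' * (genE n m ⟨2, h2⟩ j')⁻¹ with hbdef
  have ha : a ∈ Subgroup.closure (S1 n m r h0 ∪ S2 n m r) :=
    Subgroup.subset_closure (Or.inl ⟨j, ⟨1, h1⟩, hj, by simp, rfl⟩)
  have hb : b ∈ Subgroup.closure (S1 n m r h0 ∪ S2 n m r) :=
    Subgroup.subset_closure (Or.inl ⟨j', ⟨2, h2⟩, hj', by simp, rfl⟩)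
  have key : ⁅genE n m ⟨0, h0⟩ j, genE n m ⟨0, h0⟩ j'⁆ = ⁅a, b⁆ := by
    funext w
    by_cases hw0 : w = ⟨0, h0⟩
    · subst hw0
      simp [commutatorElement_def, hadef, hbdef, genE_apply, Fin.ext_iff]
    · by_cases hw1 : w = ⟨1, h1⟩
      · subst hw1
        simp [commutatorElement_def, hadef, hbdef, genE_apply, Fin.ext_iff]
      · by_cases hw2 : w = ⟨2, h2⟩
        · subst hw2
          simp [commutatorElement_def, hadef, hbdef, genE_apply, Fin.ext_iff]
        · simp [commutatorElement_def, hadef, hbdef, genE_apply, hw0, hw1, hw2]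
  rw [SetLike.mem_coe, key, commutatorElement_def]
  exact mul_mem (mul_mem (mul_mem ha hb) (inv_mem ha)) (inv_mem hb)

end Knmr


/-- For `n ≥ 2`, `K^n_m(r)` is generated by `S₁ ∪ S₂ ∪ S₃`; for `n ≥ 3` it is generated by
`S₁ ∪ S₂`. -/
theorem generators_of_Knmr (n m r : ℕ) (hm : 1 ≤ m) (hrm : r ≤ m) (hn : 2 ≤ n) :
    Subgroup.closure (S1 n m r (by omega) ∪ S2 n m r ∪ S3 n m r (by omega)) =
      (theta n m r).ker ∧
    (3 ≤ n →
      Subgroup.closure (S1 n m r (by omega) ∪ S2 n m r) = (theta n m r).ker) := by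
  have h0 : 0 < n := by omega
  have part1 : Knmr.HH n m r h0 = (theta n m r).ker :=
    le_antisymm (Knmr.hh_le_ker h0) (Knmr.ker_le_hh h0 hn hrm)
  constructor
  · exact part1
  · intro hn3
    have heq : Subgroup.closure (S1 n m r h0 ∪ S2 n m r) = Knmr.HH n m r h0 := by
      apply le_antisymm
      · exact Subgroup.closure_mono (fun x hx => Or.inl hx)
      · rw [Knmr.HH, Subgroup.closure_le]
        rintro x (hx | hx3)
        · exact Subgroup.subset_closure hx
        · exact Knmr.s3_sub h0 hn3 hx3
    rw [← part1]
    exact heq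
end
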